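/- arXiv:2511.06837 — 5 statements merged into one kernel-verified Lean document; each statement's English description precedes it below -/
import Mathlib

section
/- Let σ : ℝ → ℝ be continuous and let Ψ : ℝ^{d₀} → ℝ^{d_{L+1}} be a network with activation σ and layer dimensions d₀, d₁, …, d_{L+1}, given by weight matrices W_i ∈ ℝ^{d_{i+1} × d_i} and bias vectors b_i ∈ ℝ^{d_{i+1}} (i = 0, …, L). Then for every compact set K ⊆ ℝ^{d₀} and every ε > 0 there exist full-rank matrices W'_i ∈ ℝ^{d_{i+1} × d_i} such that the network Φ with the same layer dimensions, weight matrices W'_i and the same bias vectors b_i satisfies sup_{x ∈ K} ‖Φ(x) − Ψ(x)‖_∞ < ε. -/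
lemma evalCharpoly {k : ℕ} (M : Matrix (Fin k) (Fin k) ℝ) (t : ℝ) :
    M.charpoly.eval t = (t • (1 : Matrix (Fin k) (Fin k) ℝ) - M).det := by
  rw [Matrix.charpoly, ← Polynomial.coe_evalRingHom, RingHom.map_det]
  congr 1
  ext i j
  by_cases h : i = j <;>
    simp [h, Matrix.charmatrix_apply, Matrix.diagonal_apply, Matrix.one_apply,
      Matrix.smul_apply, Matrix.sub_apply, Matrix.map_apply]

lemma rank_submatrix_le' {m n k : ℕ} (A : Matrix (Fin m) (Fin n) ℝ)
    (f : Fin k → Fin m) (g : Fin k → Fin n) :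
    (A.submatrix f g).rank ≤ A.rank := by
  have hEq : A.submatrix f g =
      (Matrix.of fun i j => if f i = j then (1 : ℝ) else 0) * A *
        (Matrix.of fun i j => if i = g j then (1 : ℝ) else 0) := by
    have h1 : ∀ (i : Fin k) (c : Fin n),
        ((Matrix.of fun i j => if f i = j then (1 : ℝ) else 0) * A) i c = A (f i) c := by
      intro i c
      rw [Matrix.mul_apply]
      simp [ite_mul, Finset.sum_ite_eq]
    ext i j
    rw [Matrix.mul_apply]
    simp only [Matrix.of_apply, h1, mul_ite, mul_one, mul_zero]
    rw [Finset.sum_ite_eq' Finset.univ (g j) (fun c => A (f i) c)]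
    simp
  rw [hEq]
  calc ((Matrix.of fun i j => if f i = j then (1 : ℝ) else 0) * A *
        (Matrix.of fun i j => if i = g j then (1 : ℝ) else 0)).rank
      ≤ ((Matrix.of fun i j => if f i = j then (1 : ℝ) else 0) * A).rank :=
        Matrix.rank_mul_le_left _ _
    _ ≤ A.rank := Matrix.rank_mul_le_right _ _

lemma exists_fullRank_near {m n : ℕ} (A : Matrix (Fin m) (Fin n) ℝ) {δ : ℝ} (hδ : 0 < δ) :
    ∃ A' : Matrix (Fin m) (Fin n) ℝ, A'.rank = min m n ∧ ∀ i j, |A' i j - A i j| < δ := by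
  set k := min m n with hk
  let f : Fin k → Fin m := Fin.castLE (min_le_left m n)
  let g : Fin k → Fin n := Fin.castLE (min_le_right m n)
  let E : Matrix (Fin m) (Fin n) ℝ := Matrix.of fun i j => if (i : ℕ) = (j : ℕ) then (1 : ℝ) else 0
  set p := (-(A.submatrix f g)).charpoly with hpdef
  have hp : p ≠ 0 := (Matrix.charpoly_monic _).ne_zero
  obtain ⟨t, htI, htp⟩ : ∃ t, t ∈ Set.Ioo (0 : ℝ) δ ∧ ¬ p.IsRoot t := by
    obtain ⟨t, ht⟩ := ((Set.Ioo_infinite hδ).diff (Polynomial.finite_setOf_isRoot hp)).nonempty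
    exact ⟨t, ht.1, ht.2⟩
  refine ⟨A + t • E, ?_, ?_⟩
  · have hsub : (A + t • E).submatrix f g
        = t • (1 : Matrix (Fin k) (Fin k) ℝ) - (-(A.submatrix f g)) := by
      ext i j
      by_cases h : i = j <;>
        simp [E, f, g, Matrix.submatrix_apply, Matrix.one_apply, h, Fin.val_eq_val,
          Matrix.add_apply, Matrix.smul_apply, Matrix.sub_apply, Matrix.neg_apply, add_comm]
    have hdet : ((A + t • E).submatrix f g).det ≠ 0 := by
      rw [hsub, ← evalCharpoly]
      exact htp
    have h1 : ((A + t • E).submatrix f g).rank = k := by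
      rw [Matrix.rank_of_isUnit _ ((Matrix.isUnit_iff_isUnit_det _).mpr (isUnit_iff_ne_zero.mpr hdet)), Fintype.card_fin]
    have h2 := rank_submatrix_le' (A + t • E) f g
    have h3 : (A + t • E).rank ≤ m := Matrix.rank_le_height _
    have h4 : (A + t • E).rank ≤ n := Matrix.rank_le_width _
    omega
  · intro i j
    have h1 : (A + t • E) i j - A i j = t * E i j := by
      simp [Matrix.add_apply, Matrix.smul_apply]
    rw [h1]
    have h2 : |E i j| ≤ 1 := by
      simp only [E, Matrix.of_apply]
      split <;> simp
    calc |t * E i j| = |t| * |E i j| := abs_mul _ _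
      _ ≤ |t| * 1 := by gcongr
      _ < δ := by rw [mul_one, abs_of_pos htI.1]; exact htI.2


/-- The value of the `i`-th hidden layer (with `layersFun ... 0 = id` the input layer):
`layersFun σ dims W b (i+1) x = σ̄ (W_i (layersFun ... i x) + b_i)`. -/
noncomputable def layersFun (σ : ℝ → ℝ) (dims : ℕ → ℕ)
    (W : ∀ i : ℕ, Matrix (Fin (dims (i + 1))) (Fin (dims i)) ℝ)
    (b : ∀ i : ℕ, Fin (dims (i + 1)) → ℝ) :
    (i : ℕ) → (Fin (dims 0) → ℝ) → (Fin (dims i) → ℝ)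
  | 0 => fun x => x
  | (i + 1) => fun x j => σ ((W i).mulVec (layersFun σ dims W b i x) j + b i j)

/-- The network `T_L ∘ σ̄ ∘ T_{L-1} ∘ ⋯ ∘ σ̄ ∘ T_0` with `L` hidden layers of widths
`dims 1, …, dims L`, input dimension `dims 0` and output dimension `dims (L+1)`. -/
noncomputable def netFun (σ : ℝ → ℝ) (dims : ℕ → ℕ)
    (W : ∀ i : ℕ, Matrix (Fin (dims (i + 1))) (Fin (dims i)) ℝ)
    (b : ∀ i : ℕ, Fin (dims (i + 1)) → ℝ) (L : ℕ)
    (x : Fin (dims 0) → ℝ) : Fin (dims (L + 1)) → ℝ :=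
  (W L).mulVec (layersFun σ dims W b L x) + b L

/-- any network with a continuous activation can be approximated, uniformly on
any compact set, by a network with the same layer dimensions and bias vectors whose weight
matrices all have full rank. -/
theorem approx_by_fullRank_weights (σ : ℝ → ℝ) (hσ : Continuous σ) (L : ℕ) (dims : ℕ → ℕ)
    (W : ∀ i : ℕ, Matrix (Fin (dims (i + 1))) (Fin (dims i)) ℝ)
    (b : ∀ i : ℕ, Fin (dims (i + 1)) → ℝ)
    (K : Set (Fin (dims 0) → ℝ)) (hK : IsCompact K) (ε : ℝ) (hε : 0 < ε) :
    ∃ W' : ∀ i : ℕ, Matrix (Fin (dims (i + 1))) (Fin (dims i)) ℝ,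
      (∀ i : ℕ, i ≤ L → (W' i).rank = min (dims (i + 1)) (dims i)) ∧
      ∀ x ∈ K, ‖netFun σ dims W' b L x - netFun σ dims W b L x‖ < ε := by
  classical
  haveI : CompactSpace K := isCompact_iff_compactSpace.mp hK
  set P := ∀ i : Fin (L + 1), Fin (dims (i + 1)) → Fin (dims i) → ℝ with hP
  let ext : P → ∀ i : ℕ, Matrix (Fin (dims (i + 1))) (Fin (dims i)) ℝ := fun p i =>
    if h : i < L + 1 then Matrix.of (p ⟨i, h⟩) else W i
  have hcontW : ∀ i : ℕ, Continuous fun q : P × (Fin (dims 0) → ℝ) => ext q.1 i := by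
    intro i
    by_cases h : i < L + 1
    · simp only [ext, dif_pos h]
      exact (continuous_apply _).comp continuous_fst
    · simp only [ext, dif_neg h]
      exact continuous_const
  have hlayers : ∀ i : ℕ,
      Continuous fun q : P × (Fin (dims 0) → ℝ) => layersFun σ dims (ext q.1) b i q.2 := by
    intro i
    induction i with
    | zero => exact continuous_snd
    | succ i ih =>
      show Continuous fun q : P × (Fin (dims 0) → ℝ) => fun j =>
        σ ((ext q.1 i).mulVec (layersFun σ dims (ext q.1) b i q.2) j + b i j)
      refine continuous_pi fun j => hσ.comp (Continuous.add ?_ continuous_const)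
      show Continuous fun q : P × (Fin (dims 0) → ℝ) =>
        ∑ k, ext q.1 i j k * layersFun σ dims (ext q.1) b i q.2 k
      refine continuous_finset_sum _ fun k _ => Continuous.mul ?_ ?_
      · exact (continuous_apply k).comp ((continuous_apply j).comp (hcontW i))
      · exact (continuous_apply k).comp ih
  let G : C(P × K, Fin (dims (L + 1)) → ℝ) :=
    ⟨fun q => netFun σ dims (ext q.1) b L q.2, by
      have hψ : Continuous fun q : P × K => (q.1, (q.2 : Fin (dims 0) → ℝ)) :=
        continuous_fst.prodMk (continuous_subtype_val.comp continuous_snd)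
      show Continuous fun q : P × K => fun j =>
        (∑ k, ext q.1 L j k * layersFun σ dims (ext q.1) b L (q.2 : Fin (dims 0) → ℝ) k) + b L j
      refine continuous_pi fun j => Continuous.add ?_ continuous_const
      refine continuous_finset_sum _ fun k _ => Continuous.mul ?_ ?_
      · exact ((continuous_apply k).comp ((continuous_apply j).comp (hcontW L))).comp hψ
      · exact ((continuous_apply k).comp (hlayers L)).comp hψ⟩
  have hF : ContinuousAt (fun p : P => G.curry p) (fun i => W i) :=
    (ContinuousMap.curry G).continuous.continuousAt
  obtain ⟨δ, hδ, hball⟩ := Metric.continuousAt_iff.mp hF ε hε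
  choose A' hA'rank hA'close using fun i : Fin (L + 1) => exists_fullRank_near (W i) hδ
  set p : P := fun i => A' i with hpdef
  have hdist : dist p (fun i : Fin (L + 1) => (W i : Fin (dims (i + 1)) → Fin (dims i) → ℝ)) < δ := by
    refine (dist_pi_lt_iff hδ).2 ?_
    intro i
    refine (dist_pi_lt_iff hδ).2 ?_
    intro r
    refine (dist_pi_lt_iff hδ).2 ?_
    intro c
    rw [Real.dist_eq]
    exact hA'close i r c
  have hkey := hball hdist
  have hext0 : ext (fun i : Fin (L + 1) => (W i : Fin (dims (i + 1)) → Fin (dims i) → ℝ)) = W := by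
    funext i
    simp only [ext]
    split <;> rfl
  refine ⟨ext p, ?_, ?_⟩
  · intro i hi
    have h : i < L + 1 := Nat.lt_succ_of_le hi
    simp only [ext, dif_pos h]
    exact hA'rank ⟨i, h⟩
  · intro x hx
    have h1 : dist (G.curry p ⟨x, hx⟩)
        (G.curry (fun i : Fin (L + 1) => (W i : Fin (dims (i + 1)) → Fin (dims i) → ℝ)) ⟨x, hx⟩)
        ≤ dist (G.curry p)
          (G.curry (fun i : Fin (L + 1) => (W i : Fin (dims (i + 1)) → Fin (dims i) → ℝ))) :=
      ContinuousMap.dist_apply_le_dist _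
    have h2 := lt_of_le_of_lt h1 hkey
    have h3 : G.curry p ⟨x, hx⟩ = netFun σ dims (ext p) b L x := rfl
    have h4 : G.curry (fun i : Fin (L + 1) => (W i : Fin (dims (i + 1)) → Fin (dims i) → ℝ)) ⟨x, hx⟩
        = netFun σ dims W b L x := by
      show netFun σ dims (ext fun i : Fin (L + 1) => (W i : Fin (dims (i + 1)) → Fin (dims i) → ℝ)) b L x
        = netFun σ dims W b L x
      rw [hext0]
    rw [h3, h4, dist_eq_norm] at h2
    exact h2
end

section
/- Fix β ∈ (0,1) ∪ (1,∞) and m, n, k ∈ ℕ₊. Then the class of LeakyReLU networks ℝ^m → ℝ^n of width at most k (where each hidden layer may apply LeakyReLU_{α_i} with its own parameter α_i > 0) and the class of LeakyReLU_β networks ℝ^m → ℝ^n of width at most k (where every hidden layer applies the fixed LeakyReLU_β) compactly approximate each other: for every network Φ in either class, every compact K ⊆ ℝ^m and every ε > 0, there exists a network Ψ in the other class with sup_{x ∈ K} ‖Φ(x) − Ψ(x)‖_∞ < ε. -/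
/-- The affine map `x ↦ W x + b`. -/
noncomputable def affineMap {p q : ℕ} (W : Matrix (Fin q) (Fin p) ℝ) (b : Fin q → ℝ) :
    (Fin p → ℝ) → (Fin q → ℝ) := fun x => W.mulVec x + b

/-- `IsNet acts P L m n Φ` means that `Φ : ℝ^m → ℝ^n` is a fully connected feedforward
network `Φ = A_L ∘ σ̄ ∘ A_{L-1} ∘ ⋯ ∘ σ̄ ∘ A_0` with exactly `L` hidden layers, where each
affine layer `A_i(x) = W_i x + b_i`, each hidden layer applies componentwise some activation
function belonging to the family `acts`, and every hidden width `d` satisfies `P d`. -/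
inductive IsNet (acts : Set (ℝ → ℝ)) (P : ℕ → Prop) : ℕ → (m : ℕ) → (n : ℕ) →
    ((Fin m → ℝ) → (Fin n → ℝ)) → Prop
  | base {m n : ℕ} (W : Matrix (Fin n) (Fin m) ℝ) (b : Fin n → ℝ) :
      IsNet acts P 0 m n (affineMap W b)
  | step {L m d n : ℕ} (hd : P d) (σ : ℝ → ℝ) (hσ : σ ∈ acts)
      (W : Matrix (Fin d) (Fin m) ℝ) (b : Fin d → ℝ)
      {Φ : (Fin d → ℝ) → (Fin n → ℝ)} (hΦ : IsNet acts P L d n Φ) :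
      IsNet acts P (L + 1) m n (fun x => Φ (fun j => σ (affineMap W b x j)))
noncomputable def leakyReLU (β : ℝ) (x : ℝ) : ℝ := if 0 ≤ x then x else β * x
noncomputable def eLU (β : ℝ) (x : ℝ) : ℝ := if 0 ≤ x then x else β * (Real.exp x - 1)
noncomputable def sELU (lam β : ℝ) (x : ℝ) : ℝ :=
  if 0 ≤ x then lam * x else lam * β * (Real.exp x - 1)
noncomputable def softplus (β : ℝ) (x : ℝ) : ℝ := (1 / β) * Real.log (1 + Real.exp (β * x))
noncomputable def cELU (β : ℝ) (x : ℝ) : ℝ := if 0 ≤ x then x else β * (Real.exp (x / β) - 1)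

def leakyFam : Set (ℝ → ℝ) := {f | ∃ β : ℝ, 0 < β ∧ f = leakyReLU β}
def eLUFam : Set (ℝ → ℝ) := {f | ∃ β : ℝ, 0 < β ∧ f = eLU β}
def sELUFam : Set (ℝ → ℝ) := {f | ∃ lam β : ℝ, 0 < lam ∧ 0 < β ∧ f = sELU lam β}
def softplusFam : Set (ℝ → ℝ) := {f | ∃ β : ℝ, 0 < β ∧ f = softplus β}
def cELUFam : Set (ℝ → ℝ) := {f | ∃ β : ℝ, 0 < β ∧ f = cELU β}

/-! ### basic lemmas -/

lemma affineMap_comp {p q r : ℕ} (W : Matrix (Fin r) (Fin q) ℝ) (b : Fin r → ℝ)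
    (W' : Matrix (Fin q) (Fin p) ℝ) (b' : Fin q → ℝ) (x : Fin p → ℝ) :
    affineMap W b (affineMap W' b' x) = affineMap (W * W') (W.mulVec b' + b) x := by
  simp [affineMap, Matrix.mulVec_add, Matrix.mulVec_mulVec, add_assoc]

lemma continuous_affineMap {p q : ℕ} (W : Matrix (Fin q) (Fin p) ℝ) (b : Fin q → ℝ) :
    Continuous (affineMap W b) := by
  have h1 : Continuous fun x : Fin p → ℝ => W.mulVec x := by
    have := (Matrix.mulVecLin W).continuous_of_finiteDimensional
    exact this
  exact h1.add continuous_const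

lemma continuous_leakyReLU (β : ℝ) : Continuous (leakyReLU β) := by
  unfold leakyReLU
  exact Continuous.if_le continuous_id (continuous_const.mul continuous_id)
    continuous_const continuous_id (by intro x hx; simp [← hx])

lemma isNet_continuous {acts : Set (ℝ → ℝ)} {P : ℕ → Prop} {L m n : ℕ}
    {Φ : (Fin m → ℝ) → (Fin n → ℝ)} (h : IsNet acts P L m n Φ)
    (hacts : ∀ σ ∈ acts, Continuous σ) : Continuous Φ := by
  induction h with
  | base W b => exact continuous_affineMap W b
  | step hd σ hσ W b hΦ ih =>
    exact ih.comp (continuous_pi fun j => (hacts σ hσ).comp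
      ((continuous_apply j).comp (continuous_affineMap W b)))

/-- Composing a net with an affine map on the input side. -/
lemma IsNet.comp_affine {acts : Set (ℝ → ℝ)} {P : ℕ → Prop} {L d n m : ℕ}
    {F : (Fin d → ℝ) → (Fin n → ℝ)} (hF : IsNet acts P L d n F)
    (W : Matrix (Fin d) (Fin m) ℝ) (b : Fin d → ℝ) :
    IsNet acts P L m n (fun x => F (affineMap W b x)) := by
  cases hF with
  | base W' b' =>
    have : (fun x => affineMap W' b' (affineMap W b x))
        = affineMap (W' * W) (W'.mulVec b + b') := by
      funext x; exact affineMap_comp W' b' W b x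
    rw [this]; exact IsNet.base _ _
  | step hd σ hσ W₁ b₁ hΦ =>
    rename_i Φ
    have : (fun x => (fun y => Φ (fun j => σ (affineMap W₁ b₁ y j))) (affineMap W b x))
        = fun x => Φ (fun j => σ (affineMap (W₁ * W) (W₁.mulVec b + b₁) x j)) := by
      funext x; simp only [affineMap_comp]
    rw [this]; exact IsNet.step hd σ hσ _ _ hΦ

/-- Composition of nets. -/
lemma IsNet.comp {acts : Set (ℝ → ℝ)} {P : ℕ → Prop} {L₂ L₁ d n m : ℕ}
    {F : (Fin d → ℝ) → (Fin n → ℝ)} (hF : IsNet acts P L₂ d n F)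
    {G : (Fin m → ℝ) → (Fin d → ℝ)} (hG : IsNet acts P L₁ m d G) :
    IsNet acts P (L₂ + L₁) m n (fun x => F (G x)) := by
  revert hF
  induction hG with
  | base W b => exact fun hF => hF.comp_affine W b
  | step hd σ hσ W b hΦ ih => exact fun hF => IsNet.step hd σ hσ W b (ih hF)

/-- Monotonicity in the family of activations. -/
lemma IsNet.mono {acts acts' : Set (ℝ → ℝ)} (hsub : acts ⊆ acts') {P : ℕ → Prop} {L m n : ℕ}
    {Φ : (Fin m → ℝ) → (Fin n → ℝ)} (h : IsNet acts P L m n Φ) : IsNet acts' P L m n Φ := by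
  induction h with
  | base W b => exact IsNet.base W b
  | step hd σ hσ W b hΦ ih => exact IsNet.step hd σ (hsub hσ) W b ih

/-! ### scalar kink maps and chains -/

/-- Piecewise linear map: identity above `c`, slope `r` below `c`. -/
noncomputable def kink (c r : ℝ) (y : ℝ) : ℝ := if c ≤ y then y else c + r * (y - c)

lemma kink_of_ge {c r y : ℝ} (h : c ≤ y) : kink c r y = y := if_pos h

lemma kink_of_le {c r y : ℝ} (h : y ≤ c) : kink c r y = c + r * (y - c) := by
  unfold kink; split_ifs with h'
  · have : y = c := le_antisymm h h'
    simp [this]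
  · rfl

/-- A single generalized `leakyReLU β` layer on the scalar level. -/
def OneLayer (β : ℝ) (f : ℝ → ℝ) : Prop :=
  ∃ u v w z : ℝ, f = fun y => u * leakyReLU β (v * y + w) + z

lemma oneLayer_kink_beta (β c : ℝ) : OneLayer β (kink c β) := by
  refine ⟨1, 1, -c, c, ?_⟩
  funext y
  unfold kink leakyReLU
  rcases le_or_gt c y with h | h
  · rw [if_pos h, if_pos (by linarith)]; ring
  · rw [if_neg (not_le.2 h), if_neg (by intro hc; simp at hc; linarith)]; ring

lemma oneLayer_kink_beta_inv {β : ℝ} (hβ : 0 < β) (c : ℝ) : OneLayer β (kink c β⁻¹) := by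
  refine ⟨-β⁻¹, -1, c, c, ?_⟩
  funext y
  unfold kink leakyReLU
  have hβ' : β ≠ 0 := ne_of_gt hβ
  rcases lt_trichotomy y c with h | h | h
  · rw [if_neg (not_le.2 h), if_pos (by linarith)]
    field_simp; ring
  · subst h; simp
  · rw [if_pos h.le, if_neg (by simp; linarith)]
    field_simp; ring

/-- `SChain β t f` : `f` is a composition of `t` generalized `leakyReLU β` layers
(outermost last). -/
inductive SChain (β : ℝ) : ℕ → (ℝ → ℝ) → Prop
  | base : SChain β 0 id
  | step {t : ℕ} {f g : ℝ → ℝ} (hf : SChain β t f) (hg : OneLayer β g) :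
      SChain β (t + 1) (fun x => g (f x))

lemma kink_zero_neg {r y : ℝ} (h : y ≤ 0) : kink 0 r y = r * y := by
  rw [kink_of_le h]; ring

lemma schain_kink_zero_pow {β r : ℝ} (hr : 0 < r) (hOL : OneLayer β (kink 0 r)) :
    ∀ t : ℕ, SChain β t (kink 0 (r ^ t)) := by
  intro t
  induction t with
  | zero =>
    have : kink 0 ((r : ℝ) ^ 0) = id := by
      funext y; unfold kink; split_ifs <;> simp <;> ring
    rw [this]; exact SChain.base
  | succ t ih =>
    have h := SChain.step ih hOL
    have heq : (fun x => kink 0 r (kink 0 (r ^ t) x)) = kink 0 (r ^ (t + 1)) := by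
      funext y
      rcases le_or_gt 0 y with h' | h'
      · calc kink 0 r (kink 0 (r ^ t) y) = kink 0 r y := by rw [kink_of_ge h']
          _ = y := kink_of_ge h'
          _ = kink 0 (r ^ (t+1)) y := (kink_of_ge h').symm
      · have hy : r ^ t * y ≤ 0 := by nlinarith [pow_pos hr t]
        calc kink 0 r (kink 0 (r ^ t) y) = kink 0 r (r ^ t * y) := by rw [kink_zero_neg h'.le]
          _ = r * (r ^ t * y) := kink_zero_neg hy
          _ = r ^ (t+1) * y := by ring
          _ = kink 0 (r ^ (t+1)) y := (kink_zero_neg h'.le).symm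
    rwa [heq] at h

lemma schain_kink_zero_zpow {β γ : ℝ} (hγ : 0 < γ)
    (h1 : ∀ c, OneLayer β (kink c γ)) (h2 : ∀ c, OneLayer β (kink c γ⁻¹)) (j : ℤ) :
    ∃ t : ℕ, SChain β t (kink 0 (γ ^ j)) := by
  rcases le_or_gt 0 j with hj | hj
  · refine ⟨j.toNat, ?_⟩
    have : γ ^ j = γ ^ j.toNat := by
      rw [← zpow_natCast, Int.toNat_of_nonneg hj]
    rw [this]; exact schain_kink_zero_pow hγ (h1 0) _
  · refine ⟨(-j).toNat, ?_⟩
    have : γ ^ j = (γ⁻¹) ^ (-j).toNat := by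
      rw [inv_pow, ← zpow_natCast, Int.toNat_of_nonneg (by omega), ← zpow_neg, neg_neg]
    rw [this]; exact schain_kink_zero_pow (by positivity) (h2 0) _

/-- Lift a scalar chain to a diagonal `d`-dimensional network. -/
lemma schain_lift {β : ℝ} {k t d : ℕ} (hd : d ≤ k) {f : ℝ → ℝ} (hf : SChain β t f) :
    IsNet {leakyReLU β} (fun d => d ≤ k) t d d (fun y i => f (y i)) := by
  induction hf with
  | base =>
    have : (fun (y : Fin d → ℝ) (i : Fin d) => (id : ℝ → ℝ) (y i))
        = affineMap (1 : Matrix (Fin d) (Fin d) ℝ) 0 := by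
      funext y; simp [affineMap, Matrix.one_mulVec]
    rw [this]; exact IsNet.base _ _
  | @step t f g hf hg ih =>
    obtain ⟨u, v, w, z, rfl⟩ := hg
    have Gnet : IsNet {leakyReLU β} (fun d => d ≤ k) 1 d d
        (fun q i => u * leakyReLU β (v * q i + w) + z) := by
      have h0 := IsNet.step (acts := {leakyReLU β}) (P := fun d => d ≤ k) (L := 0) (m := d) (d := d) (n := d) hd (leakyReLU β) rfl
        (Matrix.diagonal (fun _ : Fin d => v)) (fun _ => w)
        (IsNet.base (Matrix.diagonal (fun _ : Fin d => u)) (fun _ => z))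
      have heq : (fun x => affineMap (Matrix.diagonal (fun _ : Fin d => u)) (fun _ => z)
            (fun j => leakyReLU β (affineMap (Matrix.diagonal (fun _ : Fin d => v))
              (fun _ => w) x j)))
          = fun q (i : Fin d) => u * leakyReLU β (v * q i + w) + z := by
        funext q i; simp [affineMap, Matrix.mulVec_diagonal]
      rwa [heq] at h0
    have h := Gnet.comp ih
    have heq2 : (fun (x : Fin d → ℝ) => (fun (q : Fin d → ℝ) (i : Fin d) =>
            u * leakyReLU β (v * q i + w) + z) ((fun (y : Fin d → ℝ) (i : Fin d) => f (y i)) x))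
        = fun (y : Fin d → ℝ) (i : Fin d) => u * leakyReLU β (v * f (y i) + w) + z := rfl
    rw [heq2] at h
    rwa [Nat.add_comm 1 t] at h

/-! ### the zigzag approximation of `leakyReLU α` by `β`-chains -/

set_option maxHeartbeats 2000000 in
lemma teeth {β γ S α h : ℝ} (hγ0 : 0 < γ) (hγ1 : γ < 1)
    (h1 : ∀ c, OneLayer β (kink c γ)) (h2 : ∀ c, OneLayer β (kink c γ⁻¹))
    (hα : 0 < α) (hαS : α ≤ S) (hsα : γ * S < α) (hh : 0 < h)
    {t₀ : ℕ} (hbase : SChain β t₀ (kink 0 S)) :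
    ∀ N : ℕ, ∃ f : ℝ → ℝ, SChain β (t₀ + 2 * N) f ∧
      (∀ x : ℝ, 0 ≤ x → f x = x) ∧
      (∀ x : ℝ, x ≤ -(N * h) → f x = -(α * N * h) + S * (x + N * h)) ∧
      (∀ x : ℝ, -(N * h) ≤ x → x ≤ 0 → α * x ≤ f x ∧ f x ≤ α * x + S * h) := by
  have hS0 : 0 < S := lt_of_lt_of_le hα hαS
  obtain ⟨s, hs_def⟩ : ∃ s : ℝ, s = γ * S := ⟨_, rfl⟩
  have hsα : s < α := by rw [hs_def]; exact hsα
  have hs0 : 0 < s := by rw [hs_def]; positivity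
  have hSs : s < S := by rw [hs_def]; nlinarith
  have hinv : γ⁻¹ * s = S := by rw [hs_def]; field_simp
  obtain ⟨θ, hθ_def⟩ : ∃ θ : ℝ, θ = (α - s) / (S - s) := ⟨_, rfl⟩
  have hθeq : θ * (S - s) = α - s := by rw [hθ_def]; exact div_mul_cancel₀ _ (by linarith)
  have hθ0 : 0 < θ := by rw [hθ_def]; exact div_pos (by linarith) (by linarith)
  have hθ1 : θ ≤ 1 := by rw [hθ_def, div_le_one (by linarith)]; linarith
  intro N
  induction N with
  | zero =>
    refine ⟨kink 0 S, by simpa using hbase, fun x hx => kink_of_ge hx, ?_, ?_⟩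
    · intro x hx
      rw [kink_zero_neg (by simpa using hx)]
      push_cast
      ring
    · intro x hx1 hx2
      have hx0 : x = 0 := le_antisymm hx2 (by simpa using hx1)
      subst hx0
      rw [kink_of_ge le_rfl]
      constructor
      · simp
      · nlinarith
  | succ N ih =>
    obtain ⟨f, hchain, hpos, hleft, hmid⟩ := ih
    obtain ⟨v₁, hv₁⟩ : ∃ v : ℝ, v = -(α * N * h) := ⟨_, rfl⟩
    obtain ⟨m, hm⟩ : ∃ m : ℝ, m = -(N * h) - (1 - θ) * h := ⟨_, rfl⟩
    obtain ⟨v₂, hv₂⟩ : ∃ v : ℝ, v = v₁ - s * (1 - θ) * h := ⟨_, rfl⟩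
    have hNh0 : (0:ℝ) ≤ N * h := by positivity
    have hv₁0 : v₁ ≤ 0 := by rw [hv₁]; nlinarith
    have h1θ : (0:ℝ) ≤ 1 - θ := by linarith
    have hv₂₁ : v₂ ≤ v₁ := by
      rw [hv₂]
      nlinarith [mul_nonneg (mul_nonneg hs0.le h1θ) hh.le]
    -- the new function
    obtain ⟨g, hg⟩ : ∃ g : ℝ → ℝ, g = fun x => kink v₂ γ⁻¹ (kink v₁ γ (f x)) := ⟨_, rfl⟩
    have hg_eval : ∀ x : ℝ, g x = kink v₂ γ⁻¹ (kink v₁ γ (f x)) := by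
      intro x; rw [hg]
    -- on x ≥ -(N h) the new kinks act as the identity
    have hsame : ∀ x : ℝ, -(N * h) ≤ x → x ≤ 0 ∨ 0 ≤ x → g x = f x := by
      intro x hx hcase
      have hge : v₁ ≤ f x := by
        rcases hcase with hc | hc
        · have := (hmid x hx hc).1
          have : v₁ ≤ α * x := by rw [hv₁]; nlinarith
          linarith [(hmid x hx hc).1]
        · rw [hpos x hc]; linarith
      rw [hg_eval, kink_of_ge hge, kink_of_ge (le_trans hv₂₁ hge)]
    -- on x ≤ m the full new formula
    have hnew_left : ∀ x : ℝ, x ≤ m → g x = -(α * (N+1) * h) + S * (x + (N+1) * h) := by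
      intro x hxm
      have hxN : x ≤ -(N * h) := by rw [hm] at hxm; nlinarith
      have hfx : f x = v₁ + S * (x + N * h) := by rw [hleft x hxN, hv₁]
      have hxNh : x + N * h ≤ 0 := by linarith
      have hfle : f x ≤ v₁ := by
        rw [hfx]
        nlinarith [mul_nonpos_of_nonneg_of_nonpos hS0.le hxNh]
      have hk1 : kink v₁ γ (f x) = v₁ + s * (x + N * h) := by
        rw [kink_of_le hfle, hfx, hs_def]; ring
      have hk1le : v₁ + s * (x + N * h) ≤ v₂ := by
        rw [hv₂]
        have hle : x + N * h ≤ -((1 - θ) * h) := by rw [hm] at hxm; linarith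
        nlinarith [mul_le_mul_of_nonneg_left hle hs0.le]
      rw [hg_eval, hk1, kink_of_le hk1le]
      have expand : v₂ + γ⁻¹ * (v₁ + s * (x + N * h) - v₂) = v₂ + S * (x - m) := by
        have hstep : v₁ + s * (x + N * h) - v₂ = s * (x - m) := by
          rw [hv₂, hm]; ring
        rw [hstep, ← mul_assoc, hinv]
      rw [expand, hv₂, hv₁, hm]
      linear_combination (-h) * hθeq
    -- the middle formula on [m, -(N h)]
    have hnew_mid : ∀ x : ℝ, m ≤ x → x ≤ -(N * h) → g x = v₁ + s * (x + N * h) := by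
      intro x hxm hxN
      have hfx : f x = v₁ + S * (x + N * h) := by rw [hleft x hxN, hv₁]
      have hxNh : x + N * h ≤ 0 := by linarith
      have hfle : f x ≤ v₁ := by
        rw [hfx]
        nlinarith [mul_nonpos_of_nonneg_of_nonpos hS0.le hxNh]
      have hk1 : kink v₁ γ (f x) = v₁ + s * (x + N * h) := by
        rw [kink_of_le hfle, hfx, hs_def]; ring
      have hk1ge : v₂ ≤ v₁ + s * (x + N * h) := by
        rw [hv₂]
        have hle : -((1 - θ) * h) ≤ x + N * h := by rw [hm] at hxm; linarith
        nlinarith [mul_le_mul_of_nonneg_left hle hs0.le]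
      rw [hg_eval, hk1, kink_of_ge hk1ge]
    refine ⟨g, ?_, ?_, ?_, ?_⟩
    · have hc := SChain.step (SChain.step hchain (h1 v₁)) (h2 v₂)
      have harith : t₀ + 2 * N + 1 + 1 = t₀ + 2 * (N + 1) := by ring
      rw [harith] at hc
      rwa [hg]
    · intro x hx
      rw [hsame x (by linarith) (Or.inr hx)]
      exact hpos x hx
    · intro x hx
      push_cast at hx ⊢
      have : x ≤ m := by rw [hm]; nlinarith
      rw [hnew_left x this]
    · intro x hx1 hx2
      push_cast at hx1
      rcases le_or_gt (-(N * h)) x with hxN | hxN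
      · rw [hsame x hxN (Or.inl hx2)]
        exact hmid x hxN hx2
      · rcases le_or_gt m x with hxm | hxm
        · -- slope s piece
          rw [hnew_mid x hxm hxN.le]
          have hxm' : -((1 - θ) * h) ≤ x + N * h := by rw [hm] at hxm; linarith
          constructor
          · rw [hv₁]; nlinarith
          · rw [hv₁]; nlinarith
        · -- slope S piece
          rw [hnew_left x hxm.le]
          have hxub : x + (N + 1) * h ≤ θ * h := by rw [hm] at hxm; push_cast; nlinarith
          have hxlb : (0:ℝ) ≤ x + (N + 1) * h := by push_cast; linarith
          constructor
          · push_cast; nlinarith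
          · push_cast; nlinarith

lemma scalar_approx {β : ℝ} (hβ0 : 0 < β) (hβ1 : β ≠ 1) {α M ε : ℝ}
    (hα : 0 < α) (hM : 0 < M) (hε : 0 < ε) :
    ∃ (t : ℕ) (f : ℝ → ℝ), 1 ≤ t ∧ SChain β t f ∧
      ∀ x : ℝ, |x| ≤ M → |f x - leakyReLU α x| ≤ ε := by
  obtain ⟨γ, hγ0, hγ1, h1, h2⟩ : ∃ γ : ℝ, 0 < γ ∧ γ < 1 ∧
      (∀ c, OneLayer β (kink c γ)) ∧ (∀ c, OneLayer β (kink c γ⁻¹)) := by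
    rcases lt_or_gt_of_ne hβ1 with hlt | hgt
    · exact ⟨β, hβ0, hlt, fun c => oneLayer_kink_beta β c, fun c => oneLayer_kink_beta_inv hβ0 c⟩
    · refine ⟨β⁻¹, by positivity, inv_lt_one_of_one_lt₀ hgt,
        fun c => oneLayer_kink_beta_inv hβ0 c, fun c => ?_⟩
      rw [inv_inv]
      exact oneLayer_kink_beta β c
  have hγinv : 1 < γ⁻¹ := (one_lt_inv₀ hγ0).mpr hγ1
  obtain ⟨n, hn1, hn2⟩ := exists_mem_Ioc_zpow (x := α) (y := γ⁻¹) hα hγinv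
  set j : ℤ := -(n + 1) with hj
  have hS_eq : γ ^ j = (γ⁻¹) ^ (n + 1) := by rw [hj, zpow_neg, inv_zpow]
  have hs_eq : γ ^ (j + 1) = (γ⁻¹) ^ n := by
    have hje : j + 1 = -n := by rw [hj]; ring
    rw [hje, zpow_neg, inv_zpow]
  have hαS : α ≤ γ ^ j := by rw [hS_eq]; exact hn2
  have hsα : γ * γ ^ j < α := by
    have hje : γ * γ ^ j = γ ^ (j + 1) := by
      rw [zpow_add_one₀ (ne_of_gt hγ0), mul_comm]
    rw [hje, hs_eq]; exact hn1
  obtain ⟨t₀, hbase⟩ := schain_kink_zero_zpow hγ0 h1 h2 j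
  have hS0 : (0:ℝ) < γ ^ j := zpow_pos hγ0 j
  set N : ℕ := max 1 ⌈γ ^ j * M / ε⌉₊ with hN
  have hN1 : 1 ≤ N := le_max_left _ _
  have hN0 : (0:ℝ) < N := by
    have h1N : (1:ℝ) ≤ N := by exact_mod_cast hN1
    linarith
  set h : ℝ := M / N with hh_def
  have hh : 0 < h := div_pos hM hN0
  have hNh : (N : ℝ) * h = M := by rw [hh_def]; field_simp
  have hSh : γ ^ j * h ≤ ε := by
    have hceil : γ ^ j * M / ε ≤ (N:ℝ) :=
      le_trans (Nat.le_ceil _) (by exact_mod_cast le_max_right 1 ⌈γ ^ j * M / ε⌉₊)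
    rw [div_le_iff₀ hε] at hceil
    rw [hh_def, ← mul_div_assoc, div_le_iff₀ hN0, mul_comm ε]
    linarith
  obtain ⟨f, hchain, hpos, hleft, hmid⟩ := teeth hγ0 hγ1 h1 h2 hα hαS hsα hh hbase N
  refine ⟨t₀ + 2 * N, f, by omega, hchain, ?_⟩
  intro x hx
  rw [abs_le] at hx
  rcases le_or_gt 0 x with hx0 | hx0
  · rw [hpos x hx0]
    unfold leakyReLU
    rw [if_pos hx0]
    simpa using hε.le
  · have hxlb : -((N:ℝ) * h) ≤ x := by rw [hNh]; linarith [hx.1]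
    have hb := hmid x hxlb hx0.le
    have hrelu : leakyReLU α x = α * x := by
      unfold leakyReLU; rw [if_neg (not_le.2 hx0)]
    rw [hrelu, abs_le]
    constructor
    · linarith [hb.1]
    · linarith [hb.2, hSh]

lemma stack_approx {β : ℝ} (hβ0 : 0 < β) (hβ1 : β ≠ 1) {k d : ℕ} (hd : d ≤ k) {α M ε : ℝ}
    (hα : 0 < α) (hM : 0 < M) (hε : 0 < ε) :
    ∃ (t : ℕ) (G : (Fin d → ℝ) → (Fin d → ℝ)), 1 ≤ t ∧
      IsNet {leakyReLU β} (fun d => d ≤ k) t d d G ∧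
      ∀ y : Fin d → ℝ, (∀ i, |y i| ≤ M) → ∀ i, |G y i - leakyReLU α (y i)| ≤ ε := by
  obtain ⟨t, f, ht, hchain, happrox⟩ := scalar_approx hβ0 hβ1 hα hM hε
  exact ⟨t, fun y i => f (y i), ht, schain_lift hd hchain,
    fun y hy i => happrox (y i) (hy i)⟩

/-! ### main approximation lemma -/

lemma approx_by_fixed {β : ℝ} (hβ0 : 0 < β) (hβ1 : β ≠ 1) {k : ℕ}
    {L m n : ℕ} {Φ : (Fin m → ℝ) → (Fin n → ℝ)}
    (hΦ : IsNet leakyFam (fun d => d ≤ k) L m n Φ) :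
    ∀ K : Set (Fin m → ℝ), IsCompact K → ∀ ε : ℝ, 0 < ε →
      ∃ (L' : ℕ) (Ψ : (Fin m → ℝ) → (Fin n → ℝ)), L ≤ L' ∧
        IsNet {leakyReLU β} (fun d => d ≤ k) L' m n Ψ ∧ ∀ x ∈ K, ‖Φ x - Ψ x‖ < ε := by
  induction hΦ with
  | base W b =>
    exact fun K hK ε hε =>
      ⟨0, affineMap W b, le_rfl, IsNet.base W b, fun x _ => by simpa using hε⟩
  | @step L₀ m₀ d n₀ hd σ hσ W b Φ' hΦ' ih =>
    intro K hK ε hε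
    obtain ⟨α, hα, rfl⟩ := hσ
    have hA : Continuous (affineMap W b) := continuous_affineMap W b
    have hK₁ : IsCompact (affineMap W b '' K) := hK.image hA
    obtain ⟨M₀, hM₀⟩ := hK₁.isBounded.exists_norm_le
    set M : ℝ := max M₀ 1 with hM_def
    have hM : 0 < M := lt_of_lt_of_le one_pos (le_max_right _ _)
    have hσc : Continuous (leakyReLU α) := continuous_leakyReLU α
    set σb : (Fin d → ℝ) → (Fin d → ℝ) := fun y i => leakyReLU α (y i) with hσb_def
    have hσbc : Continuous σb := continuous_pi fun i => hσc.comp (continuous_apply i)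
    have hK₂ : IsCompact (σb '' (affineMap W b '' K)) := hK₁.image hσbc
    set K₃ : Set (Fin d → ℝ) := Metric.cthickening 1 (σb '' (affineMap W b '' K)) with hK₃_def
    have hK₃ : IsCompact K₃ := hK₂.cthickening
    have hΦ'c : Continuous Φ' := isNet_continuous hΦ' (fun τ hτ => by
      obtain ⟨a, _, rfl⟩ := hτ; exact continuous_leakyReLU a)
    have hUC := hK₃.uniformContinuousOn_of_continuous hΦ'c.continuousOn
    rw [Metric.uniformContinuousOn_iff] at hUC
    obtain ⟨δ, hδ0, hδ⟩ := hUC (ε/2) (by linarith)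
    obtain ⟨L'', Ψ', hL'', hΨ'net, hΨ'⟩ := ih K₃ hK₃ (ε/2) (by linarith)
    set η : ℝ := min (δ/2) (1/2) with hη_def
    have hη : 0 < η := lt_min (by linarith) (by norm_num)
    obtain ⟨t, G, ht, hGnet, hG⟩ := stack_approx hβ0 hβ1 hd hα hM hη
    refine ⟨L'' + t, fun x => Ψ' (G (affineMap W b x)), by omega,
      hΨ'net.comp (hGnet.comp_affine W b), ?_⟩
    intro x hx
    set y : Fin d → ℝ := affineMap W b x with hy_def
    have hyK₁ : y ∈ affineMap W b '' K := ⟨x, hx, rfl⟩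
    have hyM : ∀ i, |y i| ≤ M := fun i => by
      have h1 : ‖y i‖ ≤ ‖y‖ := norm_le_pi_norm y i
      have h2 : ‖y‖ ≤ M₀ := hM₀ y hyK₁
      rw [Real.norm_eq_abs] at h1
      exact le_trans (le_trans h1 h2) (le_max_left _ _)
    have happ := hG y hyM
    set z : Fin d → ℝ := σb y with hz_def
    set zh : Fin d → ℝ := G y with hzh_def
    have hzK₂ : z ∈ σb '' (affineMap W b '' K) := ⟨y, hyK₁, rfl⟩
    have hdist : dist zh z ≤ η := by
      rw [dist_eq_norm]
      rw [pi_norm_le_iff_of_nonneg hη.le]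
      intro i
      rw [Pi.sub_apply, Real.norm_eq_abs]
      exact happ i
    have hzhK₃ : zh ∈ K₃ :=
      Metric.mem_cthickening_of_dist_le zh z 1 _ hzK₂ (le_trans hdist (by
        rw [hη_def]
        exact le_trans (min_le_right _ _) (by norm_num)))
    have hzK₃ : z ∈ K₃ := Metric.self_subset_cthickening _ hzK₂
    have hΦx : (fun x => Φ' (fun j => leakyReLU α (affineMap W b x j))) x = Φ' z := rfl
    have step1 : ‖Φ' z - Φ' zh‖ < ε/2 := by
      have hdd : dist z zh < δ := by
        rw [dist_comm]
        exact lt_of_le_of_lt hdist (by rw [hη_def]; exact lt_of_le_of_lt (min_le_left _ _) (by linarith))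
      have := hδ z hzK₃ zh hzhK₃ hdd
      rwa [dist_eq_norm] at this
    have step2 : ‖Φ' zh - Ψ' zh‖ < ε/2 := hΨ' zh hzhK₃
    have htri : Φ' z - Ψ' zh = (Φ' z - Φ' zh) + (Φ' zh - Ψ' zh) := by abel
    calc ‖(fun x => Φ' (fun j => leakyReLU α (affineMap W b x j))) x
            - (fun x => Ψ' (G (affineMap W b x))) x‖
        = ‖Φ' z - Ψ' zh‖ := rfl
      _ ≤ ‖Φ' z - Φ' zh‖ + ‖Φ' zh - Ψ' zh‖ := by rw [htri]; exact norm_add_le _ _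
      _ < ε/2 + ε/2 := add_lt_add step1 step2
      _ = ε := by ring


/-- for fixed `β ∈ (0,1) ∪ (1,∞)`, the class of LeakyReLU networks of width at
most `k` (with per-layer parameters) and the class of `LeakyReLU_β` networks of width at most
`k` compactly approximate each other. -/
theorem leaky_fixed_param_equivalence (β : ℝ) (hβ : β ∈ Set.Ioo (0 : ℝ) 1 ∪ Set.Ioi 1)
    (m n k : ℕ) (hm : 0 < m) (hn : 0 < n) (hk : 0 < k) :
    (∀ (L : ℕ) (Φ : (Fin m → ℝ) → (Fin n → ℝ)), 0 < L →
      IsNet leakyFam (fun d => d ≤ k) L m n Φ →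
      ∀ K : Set (Fin m → ℝ), IsCompact K → ∀ ε > (0 : ℝ),
        ∃ (L' : ℕ) (Ψ : (Fin m → ℝ) → (Fin n → ℝ)), 0 < L' ∧
          IsNet {leakyReLU β} (fun d => d ≤ k) L' m n Ψ ∧ ∀ x ∈ K, ‖Φ x - Ψ x‖ < ε) ∧
    (∀ (L : ℕ) (Φ : (Fin m → ℝ) → (Fin n → ℝ)), 0 < L →
      IsNet {leakyReLU β} (fun d => d ≤ k) L m n Φ →
      ∀ K : Set (Fin m → ℝ), IsCompact K → ∀ ε > (0 : ℝ),
        ∃ (L' : ℕ) (Ψ : (Fin m → ℝ) → (Fin n → ℝ)), 0 < L' ∧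
          IsNet leakyFam (fun d => d ≤ k) L' m n Ψ ∧ ∀ x ∈ K, ‖Φ x - Ψ x‖ < ε) := by
  have hβ0 : 0 < β := by
    rcases hβ with h | h
    · exact h.1
    · exact lt_trans one_pos h
  have hβ1 : β ≠ 1 := by
    rcases hβ with h | h
    · exact ne_of_lt h.2
    · exact ne_of_gt h
  constructor
  · intro L Φ hL hΦ K hK ε hε
    obtain ⟨L', Ψ, hLL', hnet, happ⟩ := approx_by_fixed hβ0 hβ1 hΦ K hK ε hε
    exact ⟨L', Ψ, by omega, hnet, happ⟩
  · intro L Φ hL hΦ K hK ε hε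
    refine ⟨L, Φ, hL, hΦ.mono ?_, fun x _ => by simpa using hε⟩
    intro f hf
    rw [Set.mem_singleton_iff] at hf
    exact ⟨β, hβ0, hf⟩
end

section
/- Let F : [−1,1] → ℝ be defined by F(x) = x for x ∈ [0,1] and F(x) = 0.2·x for x ∈ [−1,0]. Then: (i) F is exactly realized by a one-hidden-layer, width-1 LeakyReLU network, namely F(x) = LeakyReLU_{0.2}(x) for all x ∈ [−1,1]; and (ii) there exists ε > 0 (one may take ε = 1/220) such that for all real parameters w₀, b₀, w₁, b₁, the one-hidden-layer width-1 network Φ(x) = w₁ · LeakyReLU_{0.1}(w₀ x + b₀) + b₁ satisfies sup_{x ∈ [−1,1]} |Φ(x) − F(x)| ≥ ε. Hence F cannot be approximated arbitrarily well on [−1,1] by one-hidden-layer width-1 networks with the fixed activation LeakyReLU_{0.1}. -/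
/-!
A width-1 network `x ↦ w₁ * leakyReLU 0.1 (w₀ * x + b₀) + b₁` is a hinge: affine on either side of a
single kink, with slopes `p` and `q` such that one is a tenth of the other, whereas `F` has slopes
`0.2` and `1`. If the kink lies outside `(-1/2, 1/2)`, the network is affine on `[-1/2, 1/2]`,
while the second difference `F (-1/2) + F (1/2) - 2 F 0 = 0.4` is large. Otherwise the network is
affine on `[-1, -1/2]` and on `[1/2, 1]`, and its slopes there cannot match `F`'s slopes `0.2` and `1`.
-/

open Set

theorem leakyReLU_of_nonneg (β : ℝ) {x : ℝ} (hx : 0 ≤ x) : leakyReLU β x = x :=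
  if_pos hx

theorem leakyReLU_of_nonpos (β : ℝ) {x : ℝ} (hx : x ≤ 0) : leakyReLU β x = β * x := by
  rcases hx.lt_or_eq with hx | rfl
  · exact if_neg hx.not_ge
  · simp [leakyReLU]

def IsHingeAt (f : ℝ → ℝ) (k p q : ℝ) : Prop :=
  (∀ x ≤ k, f x = f k + p * (x - k)) ∧ ∀ x, k ≤ x → f x = f k + q * (x - k)

theorem affine_eq_mul_sub_root {w₀ : ℝ} (b₀ : ℝ) (hw : w₀ ≠ 0) (x : ℝ) :
    w₀ * x + b₀ = w₀ * (x - -b₀ / w₀) := by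
  rw [mul_sub, mul_div_cancel₀ _ hw]
  ring

theorem exists_isHingeAt_leakyReLU_comp (β w₀ b₀ w₁ b₁ : ℝ) :
    ∃ k p q, (q = β * p ∨ p = β * q) ∧
      IsHingeAt (fun x ↦ w₁ * leakyReLU β (w₀ * x + b₀) + b₁) k p q := by
  rcases lt_trichotomy w₀ 0 with hw | rfl | hw
  · have hlin := affine_eq_mul_sub_root b₀ hw.ne
    refine ⟨-b₀ / w₀, w₁ * w₀, β * (w₁ * w₀), Or.inl rfl, fun x hx ↦ ?_, fun x hx ↦ ?_⟩
    · dsimp only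
      rw [hlin, hlin, sub_self, mul_zero, leakyReLU_of_nonneg β le_rfl,
        leakyReLU_of_nonneg β (mul_nonneg_of_nonpos_of_nonpos hw.le (by linarith))]
      ring
    · dsimp only
      rw [hlin, hlin, sub_self, mul_zero, leakyReLU_of_nonneg β le_rfl,
        leakyReLU_of_nonpos β (mul_nonpos_of_nonpos_of_nonneg hw.le (by linarith))]
      ring
  · exact ⟨0, 0, 0, Or.inl (mul_zero β).symm, by simp [IsHingeAt]⟩
  · have hlin := affine_eq_mul_sub_root b₀ hw.ne'
    refine ⟨-b₀ / w₀, β * (w₁ * w₀), w₁ * w₀, Or.inr rfl, fun x hx ↦ ?_, fun x hx ↦ ?_⟩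
    · dsimp only
      rw [hlin, hlin, sub_self, mul_zero, leakyReLU_of_nonneg β le_rfl,
        leakyReLU_of_nonpos β (mul_nonpos_of_nonneg_of_nonpos hw.le (by linarith))]
      ring
    · dsimp only
      rw [hlin, hlin, sub_self, mul_zero, leakyReLU_of_nonneg β le_rfl,
        leakyReLU_of_nonneg β (mul_nonneg hw.le (by linarith))]
      ring

theorem exists_far_from_leakyReLU_of_isHingeAt {f g : ℝ → ℝ} {k p q : ℝ}
    (hg : ∀ x ∈ Icc (-1 : ℝ) 1, g x = leakyReLU 0.2 x) (hf : IsHingeAt f k p q)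
    (hpq : q = 0.1 * p ∨ p = 0.1 * q) :
    ∃ x ∈ Icc (-1 : ℝ) 1, 1 / 220 ≤ |f x - g x| := by
  by_contra! hnear
  have near (x : ℝ) (hx : x ∈ Icc (-1 : ℝ) 1) :
      -(1 / 220) < f x - leakyReLU 0.2 x ∧ f x - leakyReLU 0.2 x < 1 / 220 := by
    rw [← hg x hx]; exact abs_lt.mp (hnear x hx)
  have h₁ := near (-1) (by norm_num)
  have h₂ := near (-1 / 2) (by norm_num)
  have h₃ := near 0 (by norm_num)
  have h₄ := near (1 / 2) (by norm_num)
  have h₅ := near 1 (by norm_num)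
  norm_num [leakyReLU] at h₁ h₂ h₃ h₄ h₅
  obtain ⟨hleft, hright⟩ := hf
  rcases le_or_gt k (-1 / 2) with hk | hk
  · have := hright (-1 / 2) hk
    have := hright 0 (by linarith)
    have := hright (1 / 2) (by linarith)
    linarith
  rcases le_or_gt (1 / 2) k with hk' | hk'
  · have := hleft (-1 / 2) (by linarith)
    have := hleft 0 (by linarith)
    have := hleft (1 / 2) hk'
    linarith
  have := hleft (-1) (by linarith)
  have := hleft (-1 / 2) hk.le
  have := hright (1 / 2) hk'.le
  have := hright 1 (by linarith)
  rcases hpq with hpq | hpq <;> linarith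

/-- the function `F(x) = x` on `[0,1]`, `F(x) = 0.2·x` on `[−1,0]` is exactly
`LeakyReLU_{0.2}` on `[−1,1]`, but cannot be approximated within some `ε > 0` (uniformly on
`[−1,1]`) by any one-hidden-layer width-1 network `x ↦ w₁·LeakyReLU_{0.1}(w₀x+b₀)+b₁`. -/
theorem leaky_depth_disadvantage (F : ℝ → ℝ)
    (hF : ∀ x ∈ Set.Icc (-1 : ℝ) 1, F x = if 0 ≤ x then x else 0.2 * x) :
    (∀ x ∈ Set.Icc (-1 : ℝ) 1, F x = leakyReLU 0.2 x) ∧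
    ∃ ε > (0 : ℝ), ∀ w₀ b₀ w₁ b₁ : ℝ,
      ∃ x ∈ Set.Icc (-1 : ℝ) 1, ε ≤ |w₁ * leakyReLU 0.1 (w₀ * x + b₀) + b₁ - F x| := by
  have hF' : ∀ x ∈ Icc (-1 : ℝ) 1, F x = leakyReLU 0.2 x := hF
  refine ⟨hF', 1 / 220, by norm_num, fun w₀ b₀ w₁ b₁ ↦ ?_⟩
  obtain ⟨k, p, q, hpq, hinge⟩ := exists_isHingeAt_leakyReLU_comp 0.1 w₀ b₀ w₁ b₁
  exact exists_far_from_leakyReLU_of_isHingeAt hF' hinge hpq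
end

section
/- For all m, n, k ∈ ℕ₊, the following three classes of networks ℝ^m → ℝ^n of width at most k compactly approximate each other: ELU networks (each hidden layer applies ELU_{β_i} for some β_i > 0), LeakyReLU networks (each hidden layer applies LeakyReLU_{β_i} for some β_i > 0), and SELU networks (each hidden layer applies SELU_{(λ_i, β_i)} for some λ_i, β_i > 0). That is, for every network Φ in any one of the three classes, every compact K ⊆ ℝ^m and every ε > 0, each of the other two classes contains a network Ψ with sup_{x ∈ K} ‖Φ(x) − Ψ(x)‖_∞ < ε. -/
namespace NetAux

/-! ### basic facts about activations -/

lemma leaky_cont (β : ℝ) : Continuous (leakyReLU β) := by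
  unfold leakyReLU
  exact Continuous.if_le continuous_id (continuous_const.mul continuous_id)
    continuous_const continuous_id (by intro x hx; simp [← hx])

lemma elu_cont (β : ℝ) : Continuous (eLU β) := by
  unfold eLU
  exact Continuous.if_le continuous_id
    (continuous_const.mul ((Real.continuous_exp).sub continuous_const))
    continuous_const continuous_id (by intro x hx; simp [← hx])

lemma selu_cont (lam β : ℝ) : Continuous (sELU lam β) := by
  unfold sELU
  exact Continuous.if_le (continuous_const.mul continuous_id)
    (continuous_const.mul ((Real.continuous_exp).sub continuous_const))
    continuous_const continuous_id (by intro x hx; simp [← hx])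

lemma leaky_strictMono {β : ℝ} (hβ : 0 < β) : StrictMono (leakyReLU β) := by
  intro a b hab
  unfold leakyReLU
  split_ifs with ha hb hb
  · exact hab
  · linarith
  · have : β * a < 0 := mul_neg_of_pos_of_neg hβ (by linarith)
    linarith
  · exact (mul_lt_mul_iff_right₀ hβ).2 hab

lemma elu_strictMono {β : ℝ} (hβ : 0 < β) : StrictMono (eLU β) := by
  intro a b hab
  unfold eLU
  split_ifs with ha hb hb
  · exact hab
  · linarith
  · have : Real.exp a < 1 := by
      rw [← Real.exp_zero]; exact Real.exp_lt_exp.2 (by linarith)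
    nlinarith
  · have : Real.exp a < Real.exp b := Real.exp_lt_exp.2 hab
    nlinarith

lemma selu_eq (lam β : ℝ) : sELU lam β = fun x => lam * eLU β x := by
  funext x; unfold sELU eLU; split_ifs <;> ring

lemma elu_mem_selu {β : ℝ} (hβ : 0 < β) : eLU β ∈ sELUFam := by
  refine ⟨1, β, one_pos, hβ, ?_⟩
  funext x; unfold sELU eLU; split_ifs <;> ring

lemma eluFam_subset_seluFam : eLUFam ⊆ sELUFam := by
  rintro f ⟨β, hβ, rfl⟩; exact elu_mem_selu hβ

lemma elu_nonpos {β : ℝ} (x : ℝ) (hx : x ≤ 0) : eLU β x = β * (Real.exp x - 1) := by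
  unfold eLU
  split_ifs with h
  · have : x = 0 := le_antisymm hx h
    simp [this]
  · rfl

lemma elu_zero (β : ℝ) : eLU β 0 = 0 := by simp [eLU]

lemma exp_diff_le {a b : ℝ} (hab : a ≤ b) (hb : b ≤ 0) :
    Real.exp b - Real.exp a ≤ b - a := by
  have h1 : (a - b) + 1 ≤ Real.exp (a - b) := Real.add_one_le_exp _
  have h2 : Real.exp b ≤ 1 := Real.exp_le_one_iff.2 hb
  have h3 : Real.exp (a - b) * Real.exp b = Real.exp a := by
    rw [← Real.exp_add]; ring_nf
  have h4 : Real.exp (a - b) ≤ 1 := Real.exp_le_one_iff.2 (by linarith)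
  have h5 : (0:ℝ) < Real.exp b := Real.exp_pos b
  nlinarith

/-! ### net lemmas -/

lemma net_congr {acts P L m n} {Φ Φ' : (Fin m → ℝ) → (Fin n → ℝ)}
    (h : IsNet acts P L m n Φ) (he : Φ = Φ') : IsNet acts P L m n Φ' := he ▸ h

lemma affineMap_comp {p q r : ℕ} (W : Matrix (Fin r) (Fin q) ℝ) (b : Fin r → ℝ)
    (V : Matrix (Fin q) (Fin p) ℝ) (c : Fin q → ℝ) (x : Fin p → ℝ) :
    affineMap W b (affineMap V c x) = affineMap (W * V) (W.mulVec c + b) x := by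
  unfold affineMap
  rw [Matrix.mulVec_add, Matrix.mulVec_mulVec]
  abel

lemma affineMap_cont {p q : ℕ} (W : Matrix (Fin q) (Fin p) ℝ) (b : Fin q → ℝ) :
    Continuous (affineMap W b) := by
  have h : Continuous fun x : Fin p → ℝ => W.mulVec x := by
    have := (W.mulVecLin : (Fin p → ℝ) →ₗ[ℝ] (Fin q → ℝ)).continuous_of_finiteDimensional
    exact this
  exact h.add continuous_const

lemma net_comp_affine {acts P L p q n} {Φ : (Fin q → ℝ) → (Fin n → ℝ)}
    (h : IsNet acts P L q n Φ) (V : Matrix (Fin q) (Fin p) ℝ) (c : Fin q → ℝ) :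
    IsNet acts P L p n (fun x => Φ (affineMap V c x)) := by
  cases h with
  | base W b =>
    exact net_congr (IsNet.base (W * V) (W.mulVec c + b))
      (by funext x; rw [← affineMap_comp])
  | step hd σ hσ W b hΦ =>
    exact net_congr (IsNet.step hd σ hσ (W * V) (W.mulVec c + b) hΦ)
      (by funext x; rw [← affineMap_comp])

lemma net_cont {acts : Set (ℝ → ℝ)} (hacts : ∀ σ ∈ acts, Continuous σ)
    {P L m n} {Φ : (Fin m → ℝ) → (Fin n → ℝ)} (h : IsNet acts P L m n Φ) :
    Continuous Φ := by
  induction h with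
  | base W b => exact affineMap_cont W b
  | step hd σ hσ W b hΦ ih =>
    exact ih.comp (continuous_pi fun j =>
      (hacts σ hσ).comp ((continuous_apply j).comp (affineMap_cont W b)))

/-! ### chains of scalar activation layers -/

inductive PreChain (T : Set (ℝ → ℝ)) : ℕ → (ℝ → ℝ) → Prop
  | single (τ : ℝ → ℝ) (hτ : τ ∈ T) (a c : ℝ) : PreChain T 1 (fun x => τ (a * x + c))
  | cons {N : ℕ} (τ : ℝ → ℝ) (hτ : τ ∈ T) (a c : ℝ) {g : ℝ → ℝ} (hg : PreChain T N g) :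
      PreChain T (N + 1) (fun x => τ (a * g x + c))

lemma PreChain.congr {T N g g'} (h : PreChain T N g) (he : g = g') : PreChain T N g' := he ▸ h

lemma PreChain.mono {T T' : Set (ℝ → ℝ)} (hTT : T ⊆ T') {N g} (h : PreChain T N g) :
    PreChain T' N g := by
  induction h with
  | single τ hτ a c => exact .single τ (hTT hτ) a c
  | cons τ hτ a c hg ih => exact .cons τ (hTT hτ) a c ih

lemma diag_affine {d : ℕ} (a c : ℝ) (y : Fin d → ℝ) (j : Fin d) :
    affineMap (a • (1 : Matrix (Fin d) (Fin d) ℝ)) (fun _ => c) y j = a * y j + c := by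
  unfold affineMap
  rw [Matrix.smul_mulVec, Matrix.one_mulVec]
  simp

lemma net_lift {T : Set (ℝ → ℝ)} {P : ℕ → Prop} {d n : ℕ} (hd : P d)
    {N : ℕ} {g : ℝ → ℝ} (hg : PreChain T N g) {m : ℕ}
    (W : Matrix (Fin d) (Fin m) ℝ) (b : Fin d → ℝ) :
    ∀ {L : ℕ} {Ψ : (Fin d → ℝ) → (Fin n → ℝ)}, IsNet T P L d n Ψ →
      IsNet T P (L + N) m n (fun x => Ψ (fun j => g (affineMap W b x j))) := by
  induction hg with
  | single τ hτ a c =>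
    intro L Ψ hΨ
    refine net_congr (IsNet.step hd τ hτ (a • W) (a • b + fun _ => c) hΨ) ?_
    funext x
    congr 1
    funext j
    congr 1
    unfold affineMap
    rw [Matrix.smul_mulVec]
    simp [mul_add]
    ring
  | @cons N' τ hτ a c g' hg' ih =>
    intro L Ψ hΨ
    have hΨ₂ : IsNet T P (L + 1) d n
        (fun y => Ψ (fun j => τ (affineMap (a • (1 : Matrix (Fin d) (Fin d) ℝ))
          (fun _ => c) y j))) := IsNet.step hd τ hτ _ _ hΨ
    have h2 := ih hΨ₂
    have hL : L + 1 + N' = L + (N' + 1) := by omega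
    rw [hL] at h2
    refine net_congr h2 ?_
    funext x
    simp only [diag_affine]

end NetAux

namespace NetAux

/-! ### ApproxBy -/

def ApproxBy (σ : ℝ → ℝ) (T : Set (ℝ → ℝ)) : Prop :=
  ∀ M δ : ℝ, 0 < M → 0 < δ → ∃ (N : ℕ) (g : ℝ → ℝ) (r q : ℝ), 0 < N ∧ PreChain T N g ∧
    ∀ x : ℝ, |x| ≤ M → |r * g x + q - σ x| ≤ δ

lemma ApproxBy.of_mem {σ : ℝ → ℝ} {T : Set (ℝ → ℝ)} (hσ : σ ∈ T) : ApproxBy σ T := by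
  intro M δ hM hδ
  refine ⟨1, fun x => σ (1 * x + 0), 1, 0, one_pos, PreChain.single σ hσ 1 0, ?_⟩
  intro x hx
  simpa using hδ.le

lemma ApproxBy.mono {σ : ℝ → ℝ} {T T' : Set (ℝ → ℝ)} (hTT : T ⊆ T')
    (h : ApproxBy σ T) : ApproxBy σ T' := by
  intro M δ hM hδ
  obtain ⟨N, g, r, q, hN, hc, hb⟩ := h M δ hM hδ
  exact ⟨N, g, r, q, hN, hc.mono hTT, hb⟩

lemma ApproxBy.smul {σ : ℝ → ℝ} {T : Set (ℝ → ℝ)} (h : ApproxBy σ T)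
    {lam : ℝ} (hlam : 0 < lam) : ApproxBy (fun x => lam * σ x) T := by
  intro M δ hM hδ
  obtain ⟨N, g, r, q, hN, hc, hb⟩ := h M (δ / lam) hM (by positivity)
  refine ⟨N, g, lam * r, lam * q, hN, hc, ?_⟩
  intro x hx
  have := hb x hx
  have h2 : lam * r * g x + lam * q - lam * σ x = lam * (r * g x + q - σ x) := by ring
  rw [h2, abs_mul, abs_of_pos hlam]
  calc lam * |r * g x + q - σ x| ≤ lam * (δ / lam) := by
        exact mul_le_mul_of_nonneg_left this hlam.le
    _ = δ := by field_simp

/-- LeakyReLU approximated by a single scaled ELU. -/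
lemma approx_leaky_elu {β : ℝ} (hβ : 0 < β) : ApproxBy (leakyReLU β) eLUFam := by
  intro M δ hM hδ
  set t : ℝ := min (δ / (β * M ^ 2)) (1 / M) with ht_def
  have ht : 0 < t := lt_min (by positivity) (by positivity)
  refine ⟨1, fun x => eLU β (t * x + 0), 1 / t, 0, one_pos,
    PreChain.single (eLU β) (show eLU β ∈ eLUFam from ⟨β, hβ, rfl⟩) t 0, ?_⟩
  intro x hx
  simp only [add_zero]
  rcases le_or_gt 0 x with hx0 | hx0
  · have h1 : 0 ≤ t * x := mul_nonneg ht.le hx0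
    rw [show eLU β (t * x) = t * x from if_pos h1,
        show leakyReLU β x = x from if_pos hx0]
    have : 1 / t * (t * x) = x := by field_simp
    rw [this]
    simpa using hδ.le
  · have h1 : t * x < 0 := mul_neg_of_pos_of_neg ht hx0
    rw [show eLU β (t * x) = β * (Real.exp (t * x) - 1) from if_neg (not_le.2 h1),
        show leakyReLU β x = β * x from if_neg (not_le.2 hx0)]
    have habs : |t * x| ≤ 1 := by
      have h2 : |t * x| = t * |x| := by rw [abs_mul, abs_of_pos ht]
      have h3 : t ≤ 1 / M := min_le_right _ _
      have h4 : t * |x| ≤ (1 / M) * M :=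
        mul_le_mul h3 hx (abs_nonneg x) (by positivity)
      rw [h2]
      calc t * |x| ≤ (1 / M) * M := h4
        _ = 1 := by field_simp
    have hkey : |Real.exp (t * x) - 1 - t * x| ≤ (t * x) ^ 2 :=
      Real.abs_exp_sub_one_sub_id_le habs
    have heq : 1 / t * (β * (Real.exp (t * x) - 1)) - β * x
        = (β / t) * (Real.exp (t * x) - 1 - t * x) := by field_simp
    rw [heq, abs_mul]
    have hb2 : |β / t| = β / t := abs_of_pos (by positivity)
    rw [hb2]
    calc β / t * |Real.exp (t * x) - 1 - t * x| ≤ β / t * (t * x) ^ 2 :=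
          mul_le_mul_of_nonneg_left hkey (by positivity)
      _ = β * t * x ^ 2 := by field_simp
      _ ≤ β * t * M ^ 2 := by
          have : x ^ 2 ≤ M ^ 2 := by nlinarith [abs_nonneg x, sq_abs x, neg_abs_le x, le_abs_self x]
          exact mul_le_mul_of_nonneg_left this (by positivity)
      _ ≤ β * (δ / (β * M ^ 2)) * M ^ 2 := by
          have h5 : t ≤ δ / (β * M ^ 2) := min_le_left _ _
          gcongr
      _ = δ := by field_simp

end NetAux

namespace NetAux

/-! ### the piecewise-linear chain approximating eLU -/

noncomputable def kch (γ : ℕ → ℝ) (t0 Δ : ℝ) : ℕ → ℝ → ℝ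
  | 0 => fun x => x - t0
  | (j+1) => fun x => leakyReLU (γ (j+1)) (kch γ t0 Δ j x - Δ)

lemma kch_ge (γ : ℕ → ℝ) (t0 Δ : ℝ) (hΔ : 0 ≤ Δ) :
    ∀ (j : ℕ) (x : ℝ), t0 + j * Δ ≤ x → kch γ t0 Δ j x = x - (t0 + j * Δ) := by
  intro j
  induction j with
  | zero => intro x hx; simp [kch]
  | succ j ih =>
    intro x hx
    have hx' : t0 + j * Δ ≤ x := by
      have : (j : ℝ) * Δ ≤ (j + 1 : ℕ) * Δ := by
        push_cast; nlinarith
      push_cast at hx ⊢; nlinarith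
    have h1 : kch γ t0 Δ j x = x - (t0 + j * Δ) := ih x hx'
    show leakyReLU (γ (j+1)) (kch γ t0 Δ j x - Δ) = x - (t0 + (j+1 : ℕ) * Δ)
    rw [h1]
    have h2 : (0:ℝ) ≤ x - (t0 + j * Δ) - Δ := by push_cast at hx ⊢; nlinarith
    rw [show leakyReLU (γ (j+1)) (x - (t0 + j * Δ) - Δ) = x - (t0 + j * Δ) - Δ from if_pos h2]
    push_cast; ring

lemma kch_mono (γ : ℕ → ℝ) (t0 Δ : ℝ) (hγ : ∀ j, 0 < γ j) :
    ∀ j : ℕ, StrictMono (kch γ t0 Δ j) := by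
  intro j
  induction j with
  | zero => intro a b hab; simpa [kch] using hab
  | succ j ih =>
    intro a b hab
    exact leaky_strictMono (hγ (j+1)) (by simpa using ih hab)

/-- knots, slopes and slope ratios for the PL interpolation of `eLU β` on `[-M, 0]`. -/
noncomputable def eKnot (M : ℝ) (N : ℕ) (i : ℕ) : ℝ := -M + i * (M / N)

noncomputable def eSlope (β M : ℝ) (N : ℕ) (i : ℕ) : ℝ :=
  if i < N then (eLU β (eKnot M N (i+1)) - eLU β (eKnot M N i)) / (M / N) else 1

noncomputable def eGamma (β M : ℝ) (N : ℕ) (j : ℕ) : ℝ :=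
  if j = 0 then 1 else eSlope β M (N) (j-1) / eSlope β M N j

section eluApprox

variable {β M : ℝ} {N : ℕ}

lemma eKnot_mono (hM : 0 < M) (hN : 0 < N) (i : ℕ) : eKnot M N i < eKnot M N (i+1) := by
  unfold eKnot
  have : (0:ℝ) < M / N := by positivity
  push_cast; nlinarith

lemma eKnot_le (hM : 0 < M) (hN : 0 < N) {i i' : ℕ} (h : i ≤ i') : eKnot M N i ≤ eKnot M N i' := by
  unfold eKnot
  have : (0:ℝ) < M / N := by positivity
  have : (i:ℝ) ≤ i' := by exact_mod_cast h
  nlinarith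

lemma eKnot_last (hN : 0 < N) : eKnot M N N = 0 := by
  unfold eKnot
  have hN' : (N:ℝ) ≠ 0 := Nat.cast_ne_zero.2 hN.ne'
  field_simp
  ring

lemma eSlope_pos (hβ : 0 < β) (hM : 0 < M) (hN : 0 < N) (i : ℕ) : 0 < eSlope β M N i := by
  unfold eSlope
  split_ifs with h
  · have h1 : eLU β (eKnot M N i) < eLU β (eKnot M N (i+1)) :=
      elu_strictMono hβ (eKnot_mono hM hN i)
    have h2 : (0:ℝ) < M / N := by positivity
    exact div_pos (by linarith) h2
  · exact one_pos

lemma eGamma_pos (hβ : 0 < β) (hM : 0 < M) (hN : 0 < N) (j : ℕ) : 0 < eGamma β M N j := by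
  unfold eGamma
  split_ifs with h
  · exact one_pos
  · exact div_pos (eSlope_pos hβ hM hN _) (eSlope_pos hβ hM hN _)

lemma eSlope_mul (hβ : 0 < β) (hM : 0 < M) (hN : 0 < N) {i : ℕ} (h : i < N) :
    eSlope β M N i * (M / N) = eLU β (eKnot M N (i+1)) - eLU β (eKnot M N i) := by
  unfold eSlope
  rw [if_pos h]
  have hM' : M ≠ 0 := ne_of_gt hM
  have hN' : (N:ℝ) ≠ 0 := Nat.cast_ne_zero.2 hN.ne'
  field_simp

/-- main invariant: values of the chain at the knots. -/
lemma kch_knot (hβ : 0 < β) (hM : 0 < M) (hN : 0 < N) :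
    ∀ j ≤ N, ∀ i ≤ j, kch (eGamma β M N) (-M) (M / N) j (eKnot M N i)
      = (eLU β (eKnot M N i) - eLU β (eKnot M N j)) / eSlope β M N j := by
  intro j
  induction j with
  | zero =>
    intro _ i hi
    interval_cases i
    simp [kch, eKnot]
  | succ j ih =>
    intro hjN i hi
    have hjN' : j ≤ N := by omega
    have hjltN : j < N := by omega
    have hΔ : (0:ℝ) < M / N := by positivity
    show leakyReLU (eGamma β M N (j+1)) (kch (eGamma β M N) (-M) (M / N) j (eKnot M N i) - M/N) = _
    rcases Nat.lt_or_ge i (j+1) with hij | hij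
    · -- i ≤ j
      have hij' : i ≤ j := by omega
      rw [ih hjN' i hij']
      have hsj := eSlope_pos (β := β) (M := M) hβ hM hN j
      have hsj1 := eSlope_pos (β := β) (M := M) hβ hM hN (j+1)
      have hnum : eLU β (eKnot M N i) - eLU β (eKnot M N j) ≤ 0 := by
        have := elu_strictMono (β := β) hβ
        have h3 : eLU β (eKnot M N i) ≤ eLU β (eKnot M N j) :=
          (elu_strictMono hβ).monotone (eKnot_le hM hN hij')
        linarith
      have harg : (eLU β (eKnot M N i) - eLU β (eKnot M N j)) / eSlope β M N j - M/N < 0 := by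
        have h4 : (eLU β (eKnot M N i) - eLU β (eKnot M N j)) / eSlope β M N j ≤ 0 :=
          div_nonpos_of_nonpos_of_nonneg hnum hsj.le
        linarith
      rw [show leakyReLU (eGamma β M N (j+1))
            ((eLU β (eKnot M N i) - eLU β (eKnot M N j)) / eSlope β M N j - M/N)
          = eGamma β M N (j+1) *
            ((eLU β (eKnot M N i) - eLU β (eKnot M N j)) / eSlope β M N j - M/N)
          from if_neg (not_le.2 harg)]
      have hγ : eGamma β M N (j+1) = eSlope β M N j / eSlope β M N (j+1) := by
        unfold eGamma
        rw [if_neg (Nat.succ_ne_zero j)]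
        simp
      rw [hγ]
      have hmul := eSlope_mul (β := β) hβ hM hN hjltN
      have key : (eLU β (eKnot M N i) - eLU β (eKnot M N j)) / eSlope β M N j - M/N
          = (eLU β (eKnot M N i) - eLU β (eKnot M N (j+1))) / eSlope β M N j := by
        rw [div_sub' (ne_of_gt hsj), div_eq_div_iff (ne_of_gt hsj) (ne_of_gt hsj)]
        linear_combination (-(eSlope β M N j)) * hmul
      rw [key]
      rw [div_mul_div_comm, div_eq_div_iff (by positivity) (ne_of_gt hsj1)]
      ring
    · -- i = j + 1
      have hieq : i = j + 1 := by omega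
      subst hieq
      have h5 : kch (eGamma β M N) (-M) (M / N) j (eKnot M N (j+1)) = M / N := by
        have h6 : -M + (j:ℝ) * (M / N) ≤ eKnot M N (j+1) := by
          unfold eKnot
          push_cast; nlinarith
        rw [kch_ge _ _ _ hΔ.le j _ h6]
        unfold eKnot
        push_cast; ring
      rw [h5]
      simp [leakyReLU]

/-- error bound for the chain against eLU on `[-M, M]`. -/
lemma kch_err (hβ : 0 < β) (hM : 0 < M) (hN : 0 < N) : ∀ x : ℝ, |x| ≤ M →
    |kch (eGamma β M N) (-M) (M / N) N x - eLU β x| ≤ β * (M / N) := by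
  intro x hx
  have hΔ : (0:ℝ) < M / N := by positivity
  have hN' : (N:ℝ) ≠ 0 := Nat.cast_ne_zero.2 hN.ne'
  have hMN : (N:ℝ) * (M / N) = M := by field_simp
  rcases le_or_gt 0 x with hx0 | hx0
  · -- x ≥ 0 : chain is exactly the identity there
    have h1 : -M + (N:ℝ) * (M / N) ≤ x := by rw [hMN]; linarith
    rw [kch_ge _ _ _ hΔ.le N x h1]
    rw [show (N:ℝ) * (M / N) = M from hMN]
    rw [show eLU β x = x from if_pos hx0]
    simp
    positivity
  · -- x < 0
    set Δ := M / N with hΔdef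
    set u := (x + M) / Δ with hu_def
    have hu0 : 0 ≤ u := by
      have : 0 ≤ x + M := by
        have := neg_abs_le x
        have := abs_le.1 hx
        linarith [this.1]
      positivity
    set i := ⌊u⌋₊ with hi_def
    have hi1 : (i:ℝ) ≤ u := Nat.floor_le hu0
    have hi2 : u < i + 1 := Nat.lt_floor_add_one u
    have hiN : i < N := by
      have h2 : u < N := by
        rw [hu_def, div_lt_iff₀ hΔ]
        rw [hΔdef]
        push_cast
        nlinarith
      have : (i:ℝ) < N := lt_of_le_of_lt hi1 h2
      exact_mod_cast this
    have hti : eKnot M N i ≤ x := by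
      unfold eKnot
      rw [hu_def] at hi1
      rw [le_div_iff₀ hΔ] at hi1
      linarith
    have hti1 : x ≤ eKnot M N (i+1) := by
      unfold eKnot
      rw [hu_def] at hi2
      rw [div_lt_iff₀ hΔ] at hi2
      push_cast
      nlinarith
    have hmono := kch_mono (eGamma β M N) (-M) (M/N) (fun j => eGamma_pos hβ hM hN j) N
    have hlo : kch (eGamma β M N) (-M) (M/N) N (eKnot M N i) ≤ kch (eGamma β M N) (-M) (M/N) N x :=
      hmono.monotone hti
    have hhi : kch (eGamma β M N) (-M) (M/N) N x ≤ kch (eGamma β M N) (-M) (M/N) N (eKnot M N (i+1)) :=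
      hmono.monotone hti1
    have hvi : kch (eGamma β M N) (-M) (M/N) N (eKnot M N i) = eLU β (eKnot M N i) := by
      rw [kch_knot hβ hM hN N le_rfl i (by omega)]
      rw [eKnot_last hN, elu_zero]
      have hsN : eSlope β M N N = 1 := by unfold eSlope; rw [if_neg (lt_irrefl N)]
      rw [hsN]
      ring
    have hvi1 : kch (eGamma β M N) (-M) (M/N) N (eKnot M N (i+1)) = eLU β (eKnot M N (i+1)) := by
      rw [kch_knot hβ hM hN N le_rfl (i+1) (by omega)]
      rw [eKnot_last hN, elu_zero]
      have hsN : eSlope β M N N = 1 := by unfold eSlope; rw [if_neg (lt_irrefl N)]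
      rw [hsN]
      ring
    have hflo : eLU β (eKnot M N i) ≤ eLU β x := (elu_strictMono hβ).monotone hti
    have hfhi : eLU β x ≤ eLU β (eKnot M N (i+1)) := (elu_strictMono hβ).monotone hti1
    -- both values lie in [f(t_i), f(t_{i+1})]
    have hosc : eLU β (eKnot M N (i+1)) - eLU β (eKnot M N i) ≤ β * Δ := by
      have hki1 : eKnot M N (i+1) ≤ 0 := by
        calc eKnot M N (i+1) ≤ eKnot M N N := eKnot_le hM hN (by omega)
          _ = 0 := eKnot_last hN
      have hki : eKnot M N i ≤ eKnot M N (i+1) := (eKnot_mono hM hN i).le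
      rw [elu_nonpos _ hki1, elu_nonpos _ (le_trans hki hki1)]
      have := exp_diff_le hki hki1
      have hgap : eKnot M N (i+1) - eKnot M N i = Δ := by
        unfold eKnot; push_cast; ring
      nlinarith
    rw [abs_le]
    constructor
    · rw [hvi] at hlo; linarith
    · rw [hvi1] at hhi; linarith

/-- the chain is a `PreChain` over `leakyFam`. -/
lemma kch_chain (γ : ℕ → ℝ) (t0 Δ : ℝ) (hγ : ∀ j, 0 < γ j) :
    ∀ N : ℕ, 0 < N → PreChain leakyFam N (kch γ t0 Δ N) := by
  intro N
  induction N with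
  | zero => omega
  | succ N ih =>
    intro _
    rcases Nat.eq_zero_or_pos N with h0 | hpos
    · subst h0
      refine (PreChain.single (leakyReLU (γ 1))
        (show leakyReLU (γ 1) ∈ leakyFam from ⟨γ 1, hγ 1, rfl⟩) 1 (-t0 - Δ)).congr ?_
      funext x
      show leakyReLU (γ 1) (1 * x + (-t0 - Δ)) = leakyReLU (γ 1) ((x - t0) - Δ)
      congr 1
      ring
    · refine (PreChain.cons (leakyReLU (γ (N+1)))
        (show leakyReLU (γ (N+1)) ∈ leakyFam from ⟨γ (N+1), hγ (N+1), rfl⟩) 1 (-Δ)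
        (ih hpos)).congr ?_
      funext x
      show leakyReLU (γ (N+1)) (1 * kch γ t0 Δ N x + (-Δ)) = leakyReLU (γ (N+1)) (kch γ t0 Δ N x - Δ)
      congr 1
      ring

end eluApprox

/-- ELU approximated by a chain of LeakyReLUs. -/
lemma approx_elu_leaky {β : ℝ} (hβ : 0 < β) : ApproxBy (eLU β) leakyFam := by
  intro M δ hM hδ
  obtain ⟨N, hN, hND⟩ : ∃ N : ℕ, 0 < N ∧ β * (M / N) ≤ δ := by
    refine ⟨⌈β * M / δ⌉₊ + 1, Nat.succ_pos _, ?_⟩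
    have h1 : β * M / δ ≤ (⌈β * M / δ⌉₊ + 1 : ℕ) := by
      push_cast
      linarith [Nat.le_ceil (β * M / δ)]
    have hpos : (0:ℝ) < (⌈β * M / δ⌉₊ + 1 : ℕ) := by positivity
    have h2 : β * M ≤ δ * (⌈β * M / δ⌉₊ + 1 : ℕ) := by
      rw [div_le_iff₀ hδ] at h1
      linarith
    rw [mul_div_assoc']
    rw [div_le_iff₀ hpos]
    linarith
  refine ⟨N, kch (eGamma β M N) (-M) (M / N) N, 1, 0, hN,
    kch_chain _ _ _ (fun j => eGamma_pos hβ hM hN j) N hN, ?_⟩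
  intro x hx
  simp only [one_mul, add_zero]
  exact le_trans (kch_err hβ hM hN x hx) hND

end NetAux

namespace NetAux

lemma approx_all : ∀ S ∈ ({leakyFam, eLUFam, sELUFam} : Set (Set (ℝ → ℝ))),
    ∀ T ∈ ({leakyFam, eLUFam, sELUFam} : Set (Set (ℝ → ℝ))),
      ∀ σ ∈ S, ApproxBy σ T := by
  have hsub : eLUFam ⊆ sELUFam := eluFam_subset_seluFam
  intro S hS T hT σ hσ
  simp only [Set.mem_insert_iff, Set.mem_singleton_iff] at hS hT
  rcases hS with rfl | rfl | rfl
  · -- S = leakyFam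
    rcases hT with rfl | rfl | rfl
    · exact ApproxBy.of_mem hσ
    · obtain ⟨β, hβ, rfl⟩ := hσ
      exact approx_leaky_elu hβ
    · obtain ⟨β, hβ, rfl⟩ := hσ
      exact (approx_leaky_elu hβ).mono hsub
  · -- S = eLUFam
    obtain ⟨β, hβ, rfl⟩ := hσ
    rcases hT with rfl | rfl | rfl
    · exact approx_elu_leaky hβ
    · exact ApproxBy.of_mem ⟨β, hβ, rfl⟩
    · exact ApproxBy.of_mem (elu_mem_selu hβ)
  · -- S = sELUFam
    obtain ⟨lam, β, hlam, hβ, rfl⟩ := hσ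
    rw [selu_eq]
    rcases hT with rfl | rfl | rfl
    · exact (approx_elu_leaky hβ).smul hlam
    · exact (ApproxBy.of_mem (show eLU β ∈ eLUFam from ⟨β, hβ, rfl⟩)).smul hlam
    · exact (ApproxBy.of_mem (elu_mem_selu hβ)).smul hlam

lemma fam_cont : ∀ S ∈ ({leakyFam, eLUFam, sELUFam} : Set (Set (ℝ → ℝ))),
    ∀ σ ∈ S, Continuous σ := by
  intro S hS σ hσ
  simp only [Set.mem_insert_iff, Set.mem_singleton_iff] at hS
  rcases hS with rfl | rfl | rfl
  · obtain ⟨β, hβ, rfl⟩ := hσ; exact leaky_cont β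
  · obtain ⟨β, hβ, rfl⟩ := hσ; exact elu_cont β
  · obtain ⟨lam, β, hlam, hβ, rfl⟩ := hσ; exact selu_cont lam β

/-- the master approximation lemma -/
lemma master {S T : Set (ℝ → ℝ)} (k : ℕ)
    (hS : ∀ σ ∈ S, Continuous σ) (hT : ∀ σ ∈ T, Continuous σ)
    (hST : ∀ σ ∈ S, ApproxBy σ T) :
    ∀ {L m n : ℕ} {Φ : (Fin m → ℝ) → Fin n → ℝ}, IsNet S (fun d => d ≤ k) L m n Φ →
      ∀ K : Set (Fin m → ℝ), IsCompact K → ∀ ε : ℝ, 0 < ε →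
        ∃ (L' : ℕ) (Ψ : (Fin m → ℝ) → Fin n → ℝ), L ≤ L' ∧
          IsNet T (fun d => d ≤ k) L' m n Ψ ∧ ∀ x ∈ K, ‖Φ x - Ψ x‖ ≤ ε := by
  intro L m n Φ hnet
  induction hnet with
  | base W b =>
    intro K hK ε hε
    exact ⟨0, affineMap W b, le_rfl, IsNet.base W b, fun x _ => by simp [hε.le]⟩
  | @step L m d n hd σ hσ W b Φ hΦ ih =>
    intro K hK ε hε
    -- bound the affine image
    obtain ⟨C₀, hC₀⟩ := hK.exists_bound_of_continuousOn (affineMap_cont W b).continuousOn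
    set M : ℝ := |C₀| + 1 with hM_def
    have hM : 0 < M := by positivity
    have hMx : ∀ x ∈ K, ∀ j, |affineMap W b x j| ≤ M := by
      intro x hx j
      have h1 : ‖affineMap W b x j‖ ≤ ‖affineMap W b x‖ := norm_le_pi_norm _ j
      have h2 := hC₀ x hx
      have h3 : C₀ ≤ |C₀| := le_abs_self C₀
      rw [Real.norm_eq_abs] at h1
      linarith
    -- bound σ on [-M, M]
    obtain ⟨C₁, hC₁⟩ := (isCompact_Icc (a := -M) (b := M)).exists_bound_of_continuousOn
      (hS σ hσ).continuousOn
    set ρ : ℝ := |C₁| + 1 with hρ_def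
    have hρ : (0:ℝ) < ρ := by positivity
    set K' : Set (Fin d → ℝ) := Metric.closedBall 0 ρ with hK'_def
    have hK'c : IsCompact K' := isCompact_closedBall _ _
    -- inductive hypothesis on the tail
    obtain ⟨L₁, Ψ', hL₁, hNetΨ', hErr'⟩ := ih K' hK'c (ε/2) (half_pos hε)
    -- uniform continuity of the tail approximant
    have hΨc : Continuous Ψ' := net_cont hT hNetΨ'
    have hUC := hK'c.uniformContinuousOn_of_continuous hΨc.continuousOn
    rw [Metric.uniformContinuousOn_iff] at hUC
    obtain ⟨δ₀, hδ₀, hUC⟩ := hUC (ε/2) (half_pos hε)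
    set δ' : ℝ := min (δ₀/2) 1 with hδ'_def
    have hδ' : 0 < δ' := lt_min (half_pos hδ₀) one_pos
    -- approximate the activation by a chain
    obtain ⟨N, g, r, q, hN, hchain, hg⟩ := hST σ hσ M δ' hM hδ'
    -- assemble the new network
    have hNetScaled : IsNet T (fun d => d ≤ k) L₁ d n
        (fun y => Ψ' (affineMap (r • (1 : Matrix (Fin d) (Fin d) ℝ)) (fun _ => q) y)) :=
      net_comp_affine hNetΨ' _ _
    have hNet : IsNet T (fun d => d ≤ k) (L₁ + N) m n
        (fun x => (fun y => Ψ' (affineMap (r • (1 : Matrix (Fin d) (Fin d) ℝ)) (fun _ => q) y))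
          (fun j => g (affineMap W b x j))) :=
      net_lift (P := fun d => d ≤ k) (d := d) hd hchain W b hNetScaled
    refine ⟨L₁ + N, _, by omega, hNet, ?_⟩
    intro x hx
    set y : Fin d → ℝ := fun j => σ (affineMap W b x j) with hy_def
    set z : Fin d → ℝ := fun j => r * g (affineMap W b x j) + q with hz_def
    have hyz : ∀ j, |y j - z j| ≤ δ' := by
      intro j
      have := hg (affineMap W b x j) (hMx x hx j)
      rw [hy_def, hz_def]
      simp only []
      rw [abs_sub_comm]
      exact this
    have hyb : ∀ j, |y j| ≤ |C₁| := by
      intro j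
      have h1 : affineMap W b x j ∈ Set.Icc (-M) M := by
        have := hMx x hx j
        rw [abs_le] at this
        exact ⟨this.1, this.2⟩
      have h2 := hC₁ _ h1
      rw [Real.norm_eq_abs] at h2
      exact le_trans h2 (le_abs_self _)
    have hyK' : y ∈ K' := by
      rw [hK'_def, Metric.mem_closedBall, dist_zero_right]
      rw [pi_norm_le_iff_of_nonneg hρ.le]
      intro j
      rw [Real.norm_eq_abs]
      have := hyb j
      rw [hρ_def]
      linarith
    have hzK' : z ∈ K' := by
      rw [hK'_def, Metric.mem_closedBall, dist_zero_right]
      rw [pi_norm_le_iff_of_nonneg hρ.le]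
      intro j
      rw [Real.norm_eq_abs]
      have h1 := hyz j
      have h2 := hyb j
      have h3 : δ' ≤ 1 := min_le_right _ _
      have h4 : |z j| ≤ |y j| + δ' := by
        have := abs_sub_abs_le_abs_sub (z j) (y j)
        rw [abs_sub_comm] at h1
        linarith
      rw [hρ_def]
      linarith
    have hdist : dist y z < δ₀ := by
      rw [dist_eq_norm]
      have h1 : ‖y - z‖ ≤ δ' := by
        rw [pi_norm_le_iff_of_nonneg hδ'.le]
        intro j
        rw [Pi.sub_apply, Real.norm_eq_abs]
        exact hyz j
      have h2 : δ' ≤ δ₀ / 2 := min_le_left _ _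
      linarith
    have hUC2 := hUC y hyK' z hzK' hdist
    have hE := hErr' y hyK'
    show ‖Φ y - Ψ' (affineMap (r • (1 : Matrix (Fin d) (Fin d) ℝ)) (fun _ => q)
      (fun j => g (affineMap W b x j)))‖ ≤ ε
    have hzeq : (affineMap (r • (1 : Matrix (Fin d) (Fin d) ℝ)) (fun _ => q)
        (fun j => g (affineMap W b x j))) = z := by
      funext j
      rw [diag_affine]
    rw [hzeq]
    have htri : ‖Φ y - Ψ' z‖ ≤ ‖Φ y - Ψ' y‖ + ‖Ψ' y - Ψ' z‖ := by
      have := norm_sub_le_norm_sub_add_norm_sub (Φ y) (Ψ' y) (Ψ' z)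
      exact this
    rw [dist_eq_norm] at hUC2
    linarith

end NetAux

/-- the classes of ELU, LeakyReLU and SELU networks `ℝ^m → ℝ^n` of width at
most `k` (each hidden layer using its own parameters) compactly approximate each other. -/
theorem elu_leaky_selu_equivalence (m n k : ℕ) (hm : 0 < m) (hn : 0 < n) (hk : 0 < k) :
    ∀ S ∈ ({leakyFam, eLUFam, sELUFam} : Set (Set (ℝ → ℝ))),
      ∀ T ∈ ({leakyFam, eLUFam, sELUFam} : Set (Set (ℝ → ℝ))),
        ∀ (L : ℕ) (Φ : (Fin m → ℝ) → (Fin n → ℝ)), 0 < L →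
          IsNet S (fun d => d ≤ k) L m n Φ →
          ∀ K : Set (Fin m → ℝ), IsCompact K → ∀ ε > (0 : ℝ),
            ∃ (L' : ℕ) (Ψ : (Fin m → ℝ) → (Fin n → ℝ)), 0 < L' ∧
              IsNet T (fun d => d ≤ k) L' m n Ψ ∧ ∀ x ∈ K, ‖Φ x - Ψ x‖ < ε := by
  intro S hS T hT L Φ hL hΦ K hK ε hε
  obtain ⟨L', Ψ, hLL, hNet, hErr⟩ := NetAux.master k (NetAux.fam_cont S hS)
    (NetAux.fam_cont T hT) (NetAux.approx_all S hS T hT) hΦ K hK (ε/2) (half_pos hε)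
  exact ⟨L', Ψ, by omega, hNet, fun x hx => lt_of_le_of_lt (hErr x hx) (half_lt_self hε)⟩
end

section
/- Let σ : ℝ → ℝ satisfy: (1) σ(x) = x for all x ≥ 0 and σ(x) < 0 for all x < 0; and (2) for every c < 0 there exists b ∈ [0,1) such that 0 ≤ σ(x)/x ≤ b for all x ∈ (−∞, c]. Then for every fixed x < 0 the iterates σⁿ(x) (the n-fold composition of σ applied to x) converge to 0 as n → ∞; consequently, for every x ∈ ℝ, lim_{n→∞} σⁿ(x) = ReLU(x) = max(x, 0). -/
/-!
On `(-∞, 0]` the map `σ` moves points up without leaving `(-∞, 0]`, so every orbit starting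
at `x ≤ 0` increases to a limit `L ≤ 0`. If `L < 0`, the whole orbit lies in `(-∞, L]`, where
`σ(y) ≥ b y` for some `b < 1`; then `σⁿ(x) ≥ bⁿ x → 0`, contradicting `σⁿ(x) ≤ L`.
Points `x ≥ 0` are fixed by `σ`.
-/

open Filter Topology

theorem pow_mul_le_of_mul_le_succ {u : ℕ → ℝ} {b : ℝ} (hb : 0 ≤ b)
    (h : ∀ n, b * u n ≤ u (n + 1)) (n : ℕ) : b ^ n * u 0 ≤ u n := by
  induction n with
  | zero => simp
  | succ n ih =>
    calc b ^ (n + 1) * u 0 = b * (b ^ n * u 0) := by ring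
      _ ≤ b * u n := mul_le_mul_of_nonneg_left ih hb
      _ ≤ u (n + 1) := h n

section

variable {σ : ℝ → ℝ} (h1 : ∀ x : ℝ, 0 ≤ x → σ x = x)
  (h2 : ∀ c : ℝ, c < 0 → ∃ b : ℝ, 0 ≤ b ∧ b < 1 ∧
    ∀ x : ℝ, x ≤ c → 0 ≤ σ x / x ∧ σ x / x ≤ b)
include h1 h2

theorem le_apply_and_apply_nonpos {y : ℝ} (hy : y ≤ 0) : y ≤ σ y ∧ σ y ≤ 0 := by
  rcases hy.lt_or_eq with hy | rfl
  · obtain ⟨b, -, hb1, hb⟩ := h2 y hy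
    obtain ⟨hratio_nonneg, hratio_le⟩ := hb y le_rfl
    have hby : b * y ≤ σ y := (div_le_iff_of_neg hy).1 hratio_le
    refine ⟨by nlinarith, ?_⟩
    rcases div_nonneg_iff.1 hratio_nonneg with h | h <;> linarith [h.1, h.2]
  · simp [h1 0 le_rfl]

theorem iterate_nonpos {x : ℝ} (hx : x ≤ 0) (n : ℕ) : σ^[n] x ≤ 0 := by
  induction n with
  | zero => exact hx
  | succ n ih =>
    rw [Function.iterate_succ_apply']
    exact (le_apply_and_apply_nonpos h1 h2 ih).2

theorem monotone_iterate_of_nonpos {x : ℝ} (hx : x ≤ 0) : Monotone fun n => σ^[n] x :=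
  monotone_nat_of_le_succ fun n => by
    rw [Function.iterate_succ_apply']
    exact (le_apply_and_apply_nonpos h1 h2 (iterate_nonpos h1 h2 hx n)).1

theorem tendsto_iterate_zero_of_nonpos {x : ℝ} (hx : x ≤ 0) :
    Tendsto (fun n => σ^[n] x) atTop (𝓝 0) := by
  have hmono := monotone_iterate_of_nonpos h1 h2 hx
  have hbdd : BddAbove (Set.range fun n => σ^[n] x) :=
    ⟨0, Set.forall_mem_range.2 (iterate_nonpos h1 h2 hx)⟩
  set L := ⨆ n, σ^[n] x
  have hL : Tendsto (fun n => σ^[n] x) atTop (𝓝 L) := tendsto_atTop_ciSup hmono hbdd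
  have hL_nonpos : L ≤ 0 := ciSup_le (iterate_nonpos h1 h2 hx)
  rcases hL_nonpos.lt_or_eq with hL_neg | hL_zero
  · exfalso
    have hle_L : ∀ n, σ^[n] x ≤ L := hmono.ge_of_tendsto hL
    obtain ⟨b, hb0, hb1, hb⟩ := h2 L hL_neg
    have hstep : ∀ n, b * σ^[n] x ≤ σ^[n + 1] x := fun n => by
      rw [Function.iterate_succ_apply']
      exact (div_le_iff_of_neg ((hle_L n).trans_lt hL_neg)).1 (hb _ (hle_L n)).2
    have hgeom : Tendsto (fun n => b ^ n * x) atTop (𝓝 0) := by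
      simpa using (tendsto_pow_atTop_nhds_zero_of_lt_one hb0 hb1).mul_const x
    have : 0 ≤ L := le_of_tendsto_of_tendsto' hgeom tendsto_const_nhds fun n =>
      (pow_mul_le_of_mul_le_succ hb0 hstep n).trans (hle_L n)
    linarith
  · rwa [hL_zero] at hL

end

theorem iterates_tendsto_relu_general (σ : ℝ → ℝ)
    (h1 : ∀ x : ℝ, 0 ≤ x → σ x = x)
    (h2 : ∀ c : ℝ, c < 0 → ∃ b : ℝ, 0 ≤ b ∧ b < 1 ∧
      ∀ x : ℝ, x ≤ c → 0 ≤ σ x / x ∧ σ x / x ≤ b) :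
    (∀ x : ℝ, x < 0 → Filter.Tendsto (fun n => σ^[n] x) Filter.atTop (nhds 0)) ∧
    (∀ x : ℝ, Filter.Tendsto (fun n => σ^[n] x) Filter.atTop (nhds (max x 0))) := by
  refine ⟨fun x hx => tendsto_iterate_zero_of_nonpos h1 h2 hx.le, fun x => ?_⟩
  rcases le_total x 0 with hx | hx
  · rw [max_eq_right hx]
    exact tendsto_iterate_zero_of_nonpos h1 h2 hx
  · rw [max_eq_left hx]
    simp only [Function.iterate_fixed (h1 x hx)]
    exact tendsto_const_nhds

/-- if `σ(x) = x` for `x ≥ 0`, `σ(x) < 0` for `x < 0`, and for every `c < 0`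
there is `b ∈ [0,1)` with `0 ≤ σ(x)/x ≤ b` on `(−∞, c]`, then the iterates `σⁿ(x)` converge
to `0` for every fixed `x < 0`; consequently `σⁿ(x) → ReLU(x) = max(x,0)` for every `x`. -/
theorem iterates_tendsto_relu (σ : ℝ → ℝ)
    (h1 : ∀ x : ℝ, 0 ≤ x → σ x = x) (h1' : ∀ x : ℝ, x < 0 → σ x < 0)
    (h2 : ∀ c : ℝ, c < 0 → ∃ b : ℝ, 0 ≤ b ∧ b < 1 ∧
      ∀ x : ℝ, x ≤ c → 0 ≤ σ x / x ∧ σ x / x ≤ b) :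
    (∀ x : ℝ, x < 0 → Filter.Tendsto (fun n => σ^[n] x) Filter.atTop (nhds 0)) ∧
    (∀ x : ℝ, Filter.Tendsto (fun n => σ^[n] x) Filter.atTop (nhds (max x 0))) :=
  iterates_tendsto_relu_general σ h1 h2
end
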